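/- arXiv:2603.19487 — 9 statements merged into one kernel-verified Lean document; each statement's English description precedes it below -/
import Mathlib

section
/- Let A be a finite algebra with minimal spectrum (i.e., PSpec(A) = {1, 1/|A|}), and let t ≈ t' be an equation with distinguished variables x, y. If A universally satisfies the specialization of t ≈ t' obtained by identifying x with y, then either A universally satisfies t ≈ t', or A satisfies the quasi-identity (t ≈ t' → x ≈ y). -/
set_option linter.unnecessarySimpa false


structure MSignature where
  ops : Type
  arity : ops → ℕ

inductive MTerm (σ : MSignature) (k : ℕ) : Type where
  | var : Fin k → MTerm σ k
  | app : (f : σ.ops) → (Fin (σ.arity f) → MTerm σ k) → MTerm σ k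

def MTerm.eval {σ : MSignature} {A : Type*}
    (interp : (f : σ.ops) → (Fin (σ.arity f) → A) → A) {k : ℕ} :
    MTerm σ k → (Fin k → A) → A
  | .var i, x => x i
  | .app f ts, x => interp f fun i => (ts i).eval interp x

/-- Probability of the equation `t ≈ t'` in the algebra `(A, interp)`. -/
noncomputable def eqProb {σ : MSignature} (A : Type*)
    (interp : (f : σ.ops) → (Fin (σ.arity f) → A) → A) {k : ℕ}
    (t t' : MTerm σ k) : ℚ :=
  (Nat.card {x : Fin k → A // t.eval interp x = t'.eval interp x} : ℚ) /
    (Nat.card A : ℚ) ^ k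

/-- The equational probability spectrum of the algebra `(A, interp)`. -/
noncomputable def PSpecA {σ : MSignature} (A : Type*)
    (interp : (f : σ.ops) → (Fin (σ.arity f) → A) → A) : Set ℚ :=
  { q | ∃ (k : ℕ) (t t' : MTerm σ k), q = eqProb A interp t t' }

/-- `(A, interp)` has minimal spectrum: every equation has probability `1` or `1/|A|`. -/
def MinimalSpectrum {σ : MSignature} (A : Type*)
    (interp : (f : σ.ops) → (Fin (σ.arity f) → A) → A) : Prop :=
  ∀ (k : ℕ) (t t' : MTerm σ k),
    eqProb A interp t t' = 1 ∨ eqProb A interp t t' = 1 / (Nat.card A : ℚ)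

/-- The signature of groupoids: one binary operation. -/
@[reducible] def grpdSig : MSignature := ⟨Unit, fun _ => 2⟩

def grpdInterp {A : Type*} (mul : A → A → A) :
    (f : grpdSig.ops) → (Fin (grpdSig.arity f) → A) → A :=
  fun _ x => mul (x 0) (x 1)

/-- A permutation is isocyclic if it is the identity or has cycle type `(1, a, …, a)`. -/
def IsIsocyclic {A : Type*} (f : A → A) : Prop :=
  Function.Bijective f ∧
    (f = id ∨ ∃ a, 1 < a ∧ (∃! x, f x = x) ∧
      ∀ x, f x ≠ x → Function.minimalPeriod f x = a)

open Classical in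
lemma diag_card {A : Type*} [Fintype A] {k : ℕ} (i j : Fin k) (hij : i ≠ j) :
    Fintype.card {x : Fin k → A // x i = x j} = Fintype.card A ^ (k - 1) := by
  classical
  have e : {x : Fin k → A // x i = x j} ≃ ({m : Fin k // m ≠ j} → A) :=
    { toFun := fun x m => x.1 m.1
      invFun := fun y => ⟨fun m => if h : m = j then y ⟨i, hij⟩ else y ⟨m, h⟩, by
        simp [hij]⟩
      left_inv := fun x => by
        ext m
        by_cases h : m = j
        · subst h; simp [← x.2]
        · simp [h]
      right_inv := fun y => by
        ext m
        simp [m.2] }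
  rw [Fintype.card_congr e, Fintype.card_fun]
  congr 1
  have : Fintype.card {m : Fin k // m = j} = 1 := Fintype.card_subtype_eq j
  have h2 := Fintype.card_subtype_compl (fun m : Fin k => m = j)
  simpa [this] using h2

theorem stmt4 {σ : MSignature} {A : Type*} [Fintype A]
    (interp : (f : σ.ops) → (Fin (σ.arity f) → A) → A)
    (hmin : MinimalSpectrum A interp)
    {k : ℕ} (t t' : MTerm σ k) (i j : Fin k) (hij : i ≠ j)
    (hspec : ∀ x : Fin k → A, x i = x j → t.eval interp x = t'.eval interp x) :
    (∀ x : Fin k → A, t.eval interp x = t'.eval interp x) ∨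
      (∀ x : Fin k → A, t.eval interp x = t'.eval interp x → x i = x j) := by

  classical
  cases isEmpty_or_nonempty A with
  | inl h => exact Or.inl fun x => (h.false (x i)).elim
  | inr hA =>
  set n := Fintype.card A with hn
  have hn0 : 0 < n := Fintype.card_pos
  have hk : 0 < k := i.pos
  set S : Finset (Fin k → A) :=
    Finset.univ.filter (fun x => t.eval interp x = t'.eval interp x) with hS
  set D : Finset (Fin k → A) := Finset.univ.filter (fun x => x i = x j) with hD
  have hDS : D ⊆ S := by
    intro x hx
    simp only [hS, hD, Finset.mem_filter, Finset.mem_univ, true_and] at *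
    exact hspec x hx
  have hcardS : Nat.card {x : Fin k → A // t.eval interp x = t'.eval interp x} = S.card := by
    rw [Nat.card_eq_fintype_card, Fintype.card_subtype]
  have hcardD : D.card = n ^ (k - 1) := by
    rw [hD, ← Fintype.card_subtype]
    exact diag_card i j hij
  have hcA : Nat.card A = n := Nat.card_eq_fintype_card
  have hprob : eqProb A interp t t' = (S.card : ℚ) / (n : ℚ) ^ k := by
    rw [eqProb, hcardS, hcA]
  have hnQ : (n : ℚ) ≠ 0 := by positivity
  rcases hmin k t t' with h1 | h2
  · left
    rw [hprob, div_eq_one_iff_eq (by positivity)] at h1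
    have hSc : S.card = n ^ k := by exact_mod_cast h1
    intro x
    by_contra hx
    have hsub : S ⊂ Finset.univ := by
      refine Finset.ssubset_univ_iff.mpr ?_
      intro h
      have : x ∈ S := h ▸ Finset.mem_univ x
      simp only [hS, Finset.mem_filter] at this
      exact hx this.2
    have := Finset.card_lt_card hsub
    rw [hSc, Finset.card_univ, Fintype.card_fun, Fintype.card_fin] at this
    exact lt_irrefl _ this
  · right
    rw [hprob, hcA, div_eq_div_iff (by positivity) hnQ] at h2
    have hScD : S.card = D.card := by
      have hDn : (D.card : ℚ) * n = 1 * (n : ℚ) ^ k := by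
        rw [hcardD, one_mul]
        push_cast
        rw [← pow_succ, Nat.sub_add_cancel hk]
      have := h2.trans hDn.symm
      have := mul_right_cancel₀ hnQ this
      exact_mod_cast this
    intro x hx
    by_contra hxd
    have hxS : x ∈ S := by simp [hS, hx]
    have hxD : x ∉ D := by simp [hD, hxd]
    have : D ⊂ S := ⟨hDS, fun h => hxD (h hxS)⟩
    have := Finset.card_lt_card this
    omega
end

section
/- A finite monounary algebra (A, f) has minimal spectrum if and only if f is a constant function or f is an isocyclic permutation (a permutation whose cycle type is (1, a, a, ..., a) for some a ≥ 1, i.e., one fixed point and all other cycles of a common length a, or the identity). -/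
@[reducible] def unarySig : MSignature := ⟨Unit, fun _ => 1⟩

def unaryInterp {A : Type*} (f : A → A) :
    (g : unarySig.ops) → (Fin (unarySig.arity g) → A) → A :=
  fun _ x => f (x 0)

/-! A term of the unary signature is an iterate `f^[r] x_i` of one variable, so an equation is
`f^[r] x_i = f^[s] x_i` or `f^[r] x_i = f^[s] x_j` with `i ≠ j`; its probability is the number of
solutions of `f^[r] a = f^[s] a`, divided by `|A|`, or of `f^[r] a = f^[s] b`, divided by `|A|²`.
Minimal spectrum says that each such count takes one of two values. Applied to `f a = f b` this
makes `f` constant or injective. For a permutation the first counts are the numbers of fixed points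
of the powers `f^[d]`, and these are all `|A|` or `1` exactly when `f` is isocyclic. -/

open Function Set

section Counting

variable {ι A : Type*} [Finite ι]

lemma card_subtype_apply (i : ι) (P : A → Prop) :
    Nat.card {x : ι → A // P (x i)} = Nat.card {a // P a} * Nat.card A ^ (Nat.card ι - 1) := by
  classical
  have := Fintype.ofFinite ι
  have hcompl : Nat.card {j // j ≠ i} = Nat.card ι - 1 := by
    simp [Nat.card_eq_fintype_card, Fintype.card_subtype_compl]
  calc Nat.card {x : ι → A // P (x i)}
      = Nat.card {y : A × ({j // j ≠ i} → A) // P y.1} :=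
        Nat.card_congr ((Equiv.funSplitAt i A).subtypeEquiv fun _ => Iff.rfl)
    _ = Nat.card {a // P a} * Nat.card A ^ (Nat.card ι - 1) := by
        rw [Nat.card_congr Equiv.prodSubtypeFstEquivSubtypeProd, Nat.card_prod, Nat.card_fun,
          hcompl]

lemma card_subtype_apply₂ [Finite A] {i j : ι} (hij : i ≠ j) (P : A → A → Prop) :
    Nat.card {x : ι → A // P (x i) (x j)} =
      Nat.card {p : A × A // P p.1 p.2} * Nat.card A ^ (Nat.card ι - 2) := by
  classical
  have := Fintype.ofFinite ι
  have := Fintype.ofFinite A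
  have hcompl : Nat.card {l // l ≠ i} - 1 = Nat.card ι - 2 := by
    simp only [ne_eq, Nat.card_eq_fintype_card, Fintype.card_subtype_compl, Fintype.card_unique]
    omega
  let j' : {l // l ≠ i} := ⟨j, hij.symm⟩
  calc Nat.card {x : ι → A // P (x i) (x j)}
      = Nat.card {y : A × ({l // l ≠ i} → A) // P y.1 (y.2 j')} :=
        Nat.card_congr ((Equiv.funSplitAt i A).subtypeEquiv fun _ => Iff.rfl)
    _ = ∑ a, Nat.card {z : {l // l ≠ i} → A // P a (z j')} := by
        rw [← Nat.card_sigma]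
        exact Nat.card_congr
          (Equiv.subtypeProdEquivSigmaSubtype fun a (z : {l // l ≠ i} → A) => P a (z j'))
    _ = ∑ a, Nat.card {b // P a b} * Nat.card A ^ (Nat.card ι - 2) := by
        simp only [card_subtype_apply, hcompl]
    _ = Nat.card {p : A × A // P p.1 p.2} * Nat.card A ^ (Nat.card ι - 2) := by
        rw [← Finset.sum_mul, Nat.card_congr (Equiv.subtypeProdEquivSigmaSubtype P),
          Nat.card_sigma]

end Counting

section Terms

variable {A : Type*} (f : A → A) {k : ℕ}

def iterTerm (i : Fin k) : ℕ → MTerm unarySig k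
  | 0 => .var i
  | r + 1 => .app () fun _ => iterTerm i r

lemma eval_iterTerm (i : Fin k) (r : ℕ) :
    (iterTerm i r).eval (unaryInterp f) = fun x => f^[r] (x i) := by
  induction r with
  | zero => rfl
  | succ r ih =>
    funext x
    simp only [iterTerm, MTerm.eval, unaryInterp, ih, iterate_succ_apply']

lemma exists_eval_eq_iterate (t : MTerm unarySig k) :
    ∃ i r, t.eval (unaryInterp f) = fun x => f^[r] (x i) := by
  induction t with
  | var i => exact ⟨i, 0, rfl⟩
  | app _ ts ih =>
    obtain ⟨i, r, h⟩ := ih 0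
    refine ⟨i, r + 1, funext fun x => ?_⟩
    simp only [MTerm.eval, unaryInterp, h, iterate_succ_apply']

end Terms

section Probability

variable {A : Type*} (f : A → A)

noncomputable def numSolutions₁ (r s : ℕ) : ℕ := Nat.card {a : A // f^[r] a = f^[s] a}

noncomputable def numSolutions₂ (r s : ℕ) : ℕ := Nat.card {p : A × A // f^[r] p.1 = f^[s] p.2}

variable {f} [Finite A] [Nonempty A] {k : ℕ} {t t' : MTerm unarySig k} {r s : ℕ}

lemma eqProb_eq_numSolutions₁ {i : Fin k}
    (ht : t.eval (unaryInterp f) = fun x => f^[r] (x i))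
    (ht' : t'.eval (unaryInterp f) = fun x => f^[s] (x i)) :
    eqProb A (unaryInterp f) t t' = numSolutions₁ f r s / Nat.card A := by
  have hk : k - 1 + 1 = k := Nat.sub_add_cancel i.pos
  have hA : (Nat.card A : ℚ) ≠ 0 := Nat.cast_ne_zero.mpr Nat.card_pos.ne'
  rw [eqProb, ht, ht', card_subtype_apply i fun a => f^[r] a = f^[s] a, Nat.card_fin,
    ← hk, pow_succ']
  push_cast
  exact mul_div_mul_right _ _ (pow_ne_zero _ hA)

lemma eqProb_eq_numSolutions₂ {i j : Fin k} (hij : i ≠ j)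
    (ht : t.eval (unaryInterp f) = fun x => f^[r] (x i))
    (ht' : t'.eval (unaryInterp f) = fun x => f^[s] (x j)) :
    eqProb A (unaryInterp f) t t' = numSolutions₂ f r s / Nat.card A ^ 2 := by
  obtain ⟨m, rfl⟩ : ∃ m, k = m + 2 := Nat.exists_eq_add_of_le'
    (by simpa using Fintype.one_lt_card_iff.mpr ⟨i, j, hij⟩ : 1 < k)
  have hA : (Nat.card A : ℚ) ≠ 0 := Nat.cast_ne_zero.mpr Nat.card_pos.ne'
  rw [eqProb, ht, ht', card_subtype_apply₂ hij fun a b => f^[r] a = f^[s] b, Nat.card_fin,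
    Nat.add_sub_cancel, pow_add, mul_comm (_ ^ m)]
  push_cast
  exact mul_div_mul_right _ _ (pow_ne_zero _ hA)

end Probability

lemma div_eq_one_or_eq_one_div_iff {m c n : ℕ} (hc : c ≠ 0) (hn : n ≠ 0) :
    ((m : ℚ) / (c * n) = 1 ∨ (m : ℚ) / (c * n) = 1 / n) ↔ m = c * n ∨ m = c := by
  have hcn : (c * n : ℚ) ≠ 0 := by positivity
  rw [div_eq_one_iff_eq hcn, div_eq_div_iff hcn (by positivity), one_mul,
    mul_left_inj' (by positivity)]
  norm_cast

section Spectrum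

variable {A : Type*} [Finite A] [Nonempty A] (f : A → A)

lemma minimalSpectrum_unaryInterp_iff :
    MinimalSpectrum A (unaryInterp f) ↔ ∀ r s,
      (numSolutions₁ f r s = Nat.card A ∨ numSolutions₁ f r s = 1) ∧
      (numSolutions₂ f r s = Nat.card A ^ 2 ∨ numSolutions₂ f r s = Nat.card A) := by
  have hA : Nat.card A ≠ 0 := Nat.card_pos.ne'
  have iff₁ (r s : ℕ) := div_eq_one_or_eq_one_div_iff (m := numSolutions₁ f r s) one_ne_zero hA
  have iff₂ (r s : ℕ) := div_eq_one_or_eq_one_div_iff (m := numSolutions₂ f r s) hA hA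
  simp only [Nat.cast_one, one_mul, ← sq] at iff₁ iff₂
  constructor
  · intro h r s
    constructor
    · rw [← iff₁, ← eqProb_eq_numSolutions₁ (eval_iterTerm f (0 : Fin 1) r) (eval_iterTerm f 0 s)]
      exact h _ _ _
    · rw [← iff₂, ← eqProb_eq_numSolutions₂ (by decide : (0 : Fin 2) ≠ 1) (eval_iterTerm f 0 r)
        (eval_iterTerm f 1 s)]
      exact h _ _ _
  · intro h k t t'
    obtain ⟨i, r, ht⟩ := exists_eval_eq_iterate f t
    obtain ⟨j, s, ht'⟩ := exists_eval_eq_iterate f t'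
    by_cases hij : i = j
    · subst hij
      rw [eqProb_eq_numSolutions₁ ht ht', iff₁]
      exact (h r s).1
    · rw [eqProb_eq_numSolutions₂ hij ht ht', iff₂]
      exact (h r s).2

end Spectrum

section Dynamics

variable {A : Type*} {f : A → A}

lemma forall_of_card_subtype_eq_card [Finite A] {p : A → Prop}
    (h : Nat.card {a // p a} = Nat.card A) (a : A) : p a := by
  obtain ⟨x, rfl⟩ := (Subtype.val_injective.bijective_of_nat_card_le h.ge).2 a
  exact x.2

lemma card_graph_of_bijective_right {g h : A → A} (hh : Bijective h) :
    Nat.card {p : A × A // g p.1 = h p.2} = Nat.card A := by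
  refine Nat.card_congr (Equiv.ofBijective (fun p => p.1.1) ⟨fun p q hpq => ?_, fun a => ?_⟩)
  · have h2 : h p.1.2 = h q.1.2 := by rw [← p.2, ← q.2, show p.1.1 = q.1.1 from hpq]
    exact Subtype.ext (Prod.ext hpq (hh.1 h2))
  · exact ⟨⟨(a, surjInv hh.2 (g a)), (surjInv_eq hh.2 (g a)).symm⟩, rfl⟩

lemma card_graph_of_bijective_left {g h : A → A} (hg : Bijective g) :
    Nat.card {p : A × A // g p.1 = h p.2} = Nat.card A :=
  (Nat.card_congr ((Equiv.prodComm A A).subtypeEquiv fun _ => eq_comm)).trans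
    (card_graph_of_bijective_right hg)

lemma IsIsocyclic.card_fixedPoints_iterate (hf : IsIsocyclic f) (d : ℕ) :
    Nat.card (fixedPoints f^[d]) = Nat.card A ∨ Nat.card (fixedPoints f^[d]) = 1 := by
  rcases hf.2 with rfl | ⟨a, -, ⟨e, he, he_unique⟩, hperiod⟩
  · simp
  by_cases had : a ∣ d
  · have : fixedPoints f^[d] = univ := eq_univ_of_forall fun x => by
      by_cases hx : f x = x
      · exact IsFixedPt.iterate hx d
      · exact isPeriodicPt_iff_minimalPeriod_dvd.mpr (hperiod x hx ▸ had)
    simp [this]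
  · have : fixedPoints f^[d] = {e} := by
      refine Set.eq_singleton_iff_unique_mem.mpr ⟨IsFixedPt.iterate he d, fun x hx => ?_⟩
      by_contra hxe
      exact had (hperiod x (mt (he_unique x) hxe) ▸ IsPeriodicPt.minimalPeriod_dvd hx)
    simp [this]

lemma isIsocyclic_of_card_fixedPoints_iterate [Finite A] (hf : Injective f)
    (h : ∀ d, Nat.card (fixedPoints f^[d]) = Nat.card A ∨ Nat.card (fixedPoints f^[d]) = 1) :
    IsIsocyclic f := by
  refine ⟨Finite.injective_iff_bijective.mp hf, or_iff_not_imp_left.mpr fun hid => ?_⟩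
  have iterate_eq_self (d : ℕ) (hd : Nat.card (fixedPoints f^[d]) = Nat.card A) (x : A) :
      f^[d] x = x :=
    forall_of_card_subtype_eq_card hd x
  obtain ⟨x₀, hx₀⟩ : ∃ x, f x ≠ x := by simpa [funext_iff] using hid
  obtain ⟨e, he, he_unique⟩ : ∃! e, f e = e := by
    have h1 := (h 1).resolve_left fun h1 => hx₀ (iterate_eq_self 1 h1 x₀)
    obtain ⟨⟨e, he⟩, he_unique⟩ := Nat.card_eq_one_iff_exists.mp h1
    exact ⟨e, he, fun y hy => congrArg Subtype.val (he_unique ⟨y, hy⟩)⟩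
  -- `x` and `e` are distinct fixed points of `f^[minimalPeriod f x]`, so by `h` it fixes everything
  have iterate_minimalPeriod (x : A) (hx : f x ≠ x) (y : A) : f^[minimalPeriod f x] y = y := by
    refine iterate_eq_self _ ((h _).resolve_right fun h1 => hx ?_) y
    have hxe : x = e := congrArg Subtype.val <| (Nat.card_eq_one_iff_unique.mp h1).1.elim
      ⟨x, isPeriodicPt_minimalPeriod f x⟩ ⟨e, IsFixedPt.iterate he _⟩
    rwa [hxe]
  refine ⟨minimalPeriod f x₀, ?_, ⟨e, he, he_unique⟩, fun x hx => ?_⟩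
  · have hpos := minimalPeriod_pos_of_mem_periodicPts (hf.mem_periodicPts x₀)
    have hne : minimalPeriod f x₀ ≠ 1 := mt minimalPeriod_eq_one_iff_isFixedPt.mp hx₀
    omega
  · exact Nat.dvd_antisymm (IsPeriodicPt.minimalPeriod_dvd (iterate_minimalPeriod x₀ hx₀ x))
      (IsPeriodicPt.minimalPeriod_dvd (iterate_minimalPeriod x hx x₀))

end Dynamics

section Classification

variable {A : Type*} {f : A → A}

lemma exists_const_or_injective_of_numSolutions₂ [Finite A] [Nonempty A]
    (h : numSolutions₂ f 1 1 = Nat.card A ^ 2 ∨ numSolutions₂ f 1 1 = Nat.card A) :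
    (∃ c, ∀ x, f x = c) ∨ Injective f := by
  rcases h with h | h
  · rw [sq, ← Nat.card_prod] at h
    have hall := forall_of_card_subtype_eq_card h
    exact Or.inl ⟨f (Classical.arbitrary A), fun x => hall (x, Classical.arbitrary A)⟩
  · let diag (a : A) : {p : A × A // f^[1] p.1 = f^[1] p.2} := ⟨(a, a), rfl⟩
    have hdiag : Bijective diag :=
      Injective.bijective_of_nat_card_le (fun a b hab => congrArg (·.1.1) hab) h.le
    refine Or.inr fun x y hxy => ?_
    obtain ⟨a, ha⟩ := hdiag.2 ⟨(x, y), hxy⟩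
    have hx : a = x := congrArg (·.1.1) ha
    have hy : a = y := congrArg (·.1.2) ha
    rw [← hx, ← hy]

lemma numSolutions_of_const {c : A} (hc : ∀ x, f x = c) (r s : ℕ) :
    (numSolutions₁ f r s = Nat.card A ∨ numSolutions₁ f r s = 1) ∧
      (numSolutions₂ f r s = Nat.card A ^ 2 ∨ numSolutions₂ f r s = Nat.card A) := by
  have iterate_eq (n : ℕ) (hn : n ≠ 0) (x : A) : f^[n] x = c := by
    obtain ⟨n, rfl⟩ := Nat.exists_eq_succ_of_ne_zero hn
    rw [iterate_succ_apply', hc]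
  rcases eq_or_ne r 0 with rfl | hr <;> rcases eq_or_ne s 0 with rfl | hs
  · exact ⟨Or.inl (by simp [numSolutions₁]),
      Or.inr (card_graph_of_bijective_left bijective_id)⟩
  · exact ⟨Or.inr (by simp [numSolutions₁, iterate_eq s hs]),
      Or.inr (card_graph_of_bijective_left bijective_id)⟩
  · exact ⟨Or.inr (by simp [numSolutions₁, iterate_eq r hr]),
      Or.inr (card_graph_of_bijective_right bijective_id)⟩
  · exact ⟨Or.inl (by simp [numSolutions₁, iterate_eq r hr, iterate_eq s hs]),
      Or.inl (by simp [numSolutions₂, iterate_eq r hr, iterate_eq s hs, sq])⟩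

lemma numSolutions₁_comm (r s : ℕ) : numSolutions₁ f r s = numSolutions₁ f s r :=
  Nat.card_congr (Equiv.subtypeEquivRight fun _ => eq_comm)

lemma Function.Injective.numSolutions₁_add_left (hf : Injective f) (d r : ℕ) :
    numSolutions₁ f (d + r) r = Nat.card (fixedPoints f^[d]) :=
  Nat.card_congr (Equiv.subtypeEquivRight fun _ => iterate_add_eq_iterate hf)

lemma numSolutions_of_isIsocyclic (hf : IsIsocyclic f) (r s : ℕ) :
    (numSolutions₁ f r s = Nat.card A ∨ numSolutions₁ f r s = 1) ∧
      (numSolutions₂ f r s = Nat.card A ^ 2 ∨ numSolutions₂ f r s = Nat.card A) := by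
  refine ⟨?_, Or.inr (card_graph_of_bijective_right (hf.1.iterate s))⟩
  obtain h | h := le_total r s
  · rw [numSolutions₁_comm, ← Nat.sub_add_cancel h, hf.1.1.numSolutions₁_add_left]
    exact hf.card_fixedPoints_iterate _
  · rw [← Nat.sub_add_cancel h, hf.1.1.numSolutions₁_add_left]
    exact hf.card_fixedPoints_iterate _

end Classification

theorem stmt5 {A : Type*} [Fintype A] [Nonempty A] (f : A → A) :
    MinimalSpectrum A (unaryInterp f) ↔ ((∃ c, ∀ x, f x = c) ∨ IsIsocyclic f) := by
  rw [minimalSpectrum_unaryInterp_iff]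
  refine ⟨fun h => ?_, ?_⟩
  · refine (exists_const_or_injective_of_numSolutions₂ (h 1 1).2).imp_right fun hf => ?_
    exact isIsocyclic_of_card_fixedPoints_iterate hf fun d => (h d 0).1
  · rintro (⟨c, hc⟩ | hf)
    · exact numSolutions_of_const hc
    · exact numSolutions_of_isIsocyclic hf
end

section
/- If a finite groupoid of order n has minimal spectrum, then it is isomorphic to the constant groupoid C_n, or to a left or right isocyclic groupoid I_n^{a−} or I_n^{a+} for some divisor a of n − 1, or it is a quasigroup (both left and right cancellative). -/
/-- `f` is an isocyclic permutation with cycle type `(1, a, …, a)`. -/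
def IsIsocyclicWith {A : Type*} (f : A → A) (a : ℕ) : Prop :=
  Function.Bijective f ∧
    ((a = 1 ∧ f = id) ∨
      (1 < a ∧ (∃! x, f x = x) ∧ ∀ x, f x ≠ x → Function.minimalPeriod f x = a))

/- ################ auxiliary development ################ -/

section Aux

variable {A : Type*} [Fintype A]

/-- If a subtype of a finite type has full cardinality, the predicate holds everywhere. -/
lemma aux_forall_of_card {B : Type*} [Fintype B] {P : B → Prop}
    (h : Fintype.card B ≤ Nat.card {x // P x}) : ∀ x, P x := by
  have hs : {x | P x} = Set.univ := by
    apply Set.eq_of_subset_of_ncard_le (Set.subset_univ _) _ (Set.finite_univ)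
    rw [Set.ncard_univ, ← Nat.card_coe_set_eq, Nat.card_eq_fintype_card (α := B)]
    exact h
  intro x
  have hx : x ∈ {y | P y} := by rw [hs]; trivial
  exact hx

lemma aux_card_cases [Nonempty A]
    (interp : (f : grpdSig.ops) → (Fin (grpdSig.arity f) → A) → A)
    (hmin : MinimalSpectrum A interp) {k : ℕ} (t t' : MTerm grpdSig k) :
    (∀ x, t.eval interp x = t'.eval interp x) ∨
    Nat.card {x : Fin k → A // t.eval interp x = t'.eval interp x} * Fintype.card A
      = Fintype.card A ^ k := by
  classical
  have hN : 0 < Fintype.card A := Fintype.card_pos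
  have hNc : (Nat.card A : ℚ) = (Fintype.card A : ℚ) := by
    rw [Nat.card_eq_fintype_card]
  rcases hmin k t t' with h | h
  · left
    unfold eqProb at h
    rw [hNc, div_eq_one_iff_eq (by positivity)] at h
    have hcard : Nat.card {x : Fin k → A // t.eval interp x = t'.eval interp x}
        = Fintype.card A ^ k := by exact_mod_cast h
    apply aux_forall_of_card (P := fun x => t.eval interp x = t'.eval interp x)
    rw [hcard, Fintype.card_fun, Fintype.card_fin]
  · right
    unfold eqProb at h
    rw [hNc, div_eq_div_iff (by positivity) (by positivity)] at h
    have : (Nat.card {x : Fin k → A // t.eval interp x = t'.eval interp x} : ℚ)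
        * (Fintype.card A : ℚ) = (Fintype.card A : ℚ) ^ k := by
      rw [h]; ring
    exact_mod_cast this

/-- Left cancellativity from the cardinality bound. -/
lemma aux_left_cancel {mul : A → A → A}
    (h : Nat.card {v : Fin 3 → A // mul (v 0) (v 1) = mul (v 0) (v 2)}
      ≤ Fintype.card A ^ 2) :
    ∀ x y z : A, mul x y = mul x z → y = z := by
  classical
  intro x y z hxy
  by_contra hne
  set S : Set (Fin 3 → A) := {v | mul (v 0) (v 1) = mul (v 0) (v 2)} with hS
  set D : Set (Fin 3 → A) := {v | v 1 = v 2} with hD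
  have hDS : D ⊆ S := by
    intro v hv
    simp only [hS, hD, Set.mem_setOf_eq] at *
    rw [hv]
  have hwS : ![x, y, z] ∈ S := by
    simp only [hS, Set.mem_setOf_eq, Matrix.cons_val_zero, Matrix.cons_val_one,
      Matrix.head_cons, Matrix.cons_val_two, Matrix.tail_cons]
    exact hxy
  have hwD : ![x, y, z] ∉ D := by
    simp only [hD, Set.mem_setOf_eq, Matrix.cons_val_one, Matrix.head_cons,
      Matrix.cons_val_two, Matrix.tail_cons]
    exact hne
  have hss : D ⊂ S := ⟨hDS, fun hcon => hwD (hcon hwS)⟩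
  have h2 : Nat.card D < Nat.card S := by
    rw [Nat.card_coe_set_eq, Nat.card_coe_set_eq]
    exact Set.ncard_lt_ncard hss (Set.toFinite S)
  have h1 : Fintype.card A ^ 2 ≤ Nat.card D := by
    have hinj : Function.Injective (fun p : A × A => (⟨![p.1, p.2, p.2], rfl⟩ : D)) := by
      intro p q hpq
      have e0 := congrFun (congrArg Subtype.val hpq) 0
      have e1 := congrFun (congrArg Subtype.val hpq) 1
      simp only [Matrix.cons_val_zero, Matrix.cons_val_one, Matrix.head_cons] at e0 e1
      exact Prod.ext e0 e1
    have hle := Nat.card_le_card_of_injective _ hinj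
    calc Fintype.card A ^ 2 = Nat.card (A × A) := by
            rw [Nat.card_eq_fintype_card, Fintype.card_prod, sq]
      _ ≤ Nat.card D := hle
  have hSc : Nat.card S ≤ Fintype.card A ^ 2 := h
  exact absurd ((h1.trans_lt h2).trans_le hSc) (lt_irrefl _)

/-- Injectivity from the cardinality bound. -/
lemma aux_inj {f : A → A}
    (h : Nat.card {v : Fin 2 → A // f (v 0) = f (v 1)} ≤ Fintype.card A) :
    Function.Injective f := by
  classical
  intro x y hxy
  by_contra hne
  set S : Set (Fin 2 → A) := {v | f (v 0) = f (v 1)} with hS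
  set D : Set (Fin 2 → A) := {v | v 0 = v 1} with hD
  have hDS : D ⊆ S := by
    intro v hv
    simp only [hS, hD, Set.mem_setOf_eq] at *
    rw [hv]
  have hwS : ![x, y] ∈ S := by
    simp only [hS, Set.mem_setOf_eq, Matrix.cons_val_zero, Matrix.cons_val_one,
      Matrix.head_cons]
    exact hxy
  have hwD : ![x, y] ∉ D := by
    simp only [hD, Set.mem_setOf_eq, Matrix.cons_val_zero, Matrix.cons_val_one,
      Matrix.head_cons]
    exact hne
  have hss : D ⊂ S := ⟨hDS, fun hcon => hwD (hcon hwS)⟩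
  have h2 : Nat.card D < Nat.card S := by
    rw [Nat.card_coe_set_eq, Nat.card_coe_set_eq]
    exact Set.ncard_lt_ncard hss (Set.toFinite S)
  have h1 : Fintype.card A ≤ Nat.card D := by
    have hinj : Function.Injective (fun a : A => (⟨![a, a], rfl⟩ : D)) := by
      intro p q hpq
      have e0 := congrFun (congrArg Subtype.val hpq) 0
      simpa using e0
    have hle := Nat.card_le_card_of_injective _ hinj
    calc Fintype.card A = Nat.card A := (Nat.card_eq_fintype_card).symm
      _ ≤ Nat.card D := hle
  have hSc : Nat.card S ≤ Fintype.card A := h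
  exact absurd ((h1.trans_lt h2).trans_le hSc) (lt_irrefl _)

/-- The key permutation lemma. -/
lemma aux_keyPerm [Nonempty A] (f : A → A) (hinj : Function.Injective f)
    (hfix : ∀ d, 0 < d → (∀ x, f^[d] x = x) ∨ (∃! x, f^[d] x = x)) :
    ∃ a, a ∣ Fintype.card A - 1 ∧ IsIsocyclicWith f a := by
  classical
  have hbij : Function.Bijective f := Finite.injective_iff_bijective.mp hinj
  by_cases hid : f = id
  · exact ⟨1, one_dvd _, hbij, Or.inl ⟨rfl, hid⟩⟩
  · set e : Equiv.Perm A := Equiv.ofBijective f hbij with he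
    have hcoe : ⇑e = f := rfl
    have hiter : ∀ m : ℕ, ⇑(e ^ m) = f^[m] := by
      intro m; rw [Equiv.Perm.coe_pow, hcoe]
    set a : ℕ := orderOf e with ha
    have hapos : 0 < a := orderOf_pos e
    have hfa : f^[a] = id := by
      rw [← hiter, pow_orderOf_eq_one]; rfl
    have hane : e ≠ 1 := by
      intro hE
      apply hid
      funext z
      have := congrArg (fun σ : Equiv.Perm A => σ z) hE
      simpa [hcoe] using this
    have ha1 : 1 < a := by
      by_contra hcon
      push_neg at hcon
      have haeq : a = 1 := le_antisymm hcon hapos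
      exact hane (orderOf_eq_one_iff.mp haeq)
    have hufix : ∃! x, f x = x := by
      rcases hfix 1 one_pos with h | h
      · exact absurd (funext fun x => by simpa using h x) hid
      · simpa using h
    obtain ⟨x₀, hx₀, hx₀u⟩ := hufix
    have hmp : ∀ x, f x ≠ x → Function.minimalPeriod f x = a := by
      intro x hx
      have hper : Function.IsPeriodicPt f a x := by
        show f^[a] x = x
        rw [hfa]; rfl
      have hpdvd : Function.minimalPeriod f x ∣ a := hper.minimalPeriod_dvd
      set p := Function.minimalPeriod f x with hp
      have hppos : 0 < p := hper.minimalPeriod_pos hapos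
      by_contra hpa
      have hplt : p < a := lt_of_le_of_ne (Nat.le_of_dvd hapos hpdvd) hpa
      rcases hfix p hppos with h | h
      · have hep : e ^ p = 1 := by
          ext z
          simp only [hiter, Equiv.Perm.coe_one, id_eq]
          exact h z
        have hdvd := orderOf_dvd_of_pow_eq_one hep
        have := Nat.le_of_dvd hppos hdvd
        omega
      · obtain ⟨z, hz, hzu⟩ := h
        have h1 : f^[p] x = x := Function.isPeriodicPt_minimalPeriod f x
        have h2 : f^[p] x₀ = x₀ := Function.IsFixedPt.iterate hx₀ p
        have hx0 := (hzu x h1).trans (hzu x₀ h2).symm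
        exact hx (hx0 ▸ hx₀)
    refine ⟨a, ?_, hbij, Or.inr ⟨ha1, ⟨x₀, hx₀, hx₀u⟩, hmp⟩⟩
    -- divisibility via orbit counting
    have hsmul : ((e • ·) : A → A) = f := funext fun y => rfl
    have horbcard : ∀ x : A,
        Nat.card (MulAction.orbit (Subgroup.zpowers e) x) = Function.minimalPeriod f x := by
      intro x
      letI : Fintype (MulAction.orbit (Subgroup.zpowers e) x) := Fintype.ofFinite _
      rw [Nat.card_eq_fintype_card, ← MulAction.minimalPeriod_eq_card, hsmul]
    letI : Fintype (MulAction.orbitRel.Quotient (Subgroup.zpowers e) A) := Fintype.ofFinite _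
    letI : ∀ ω : MulAction.orbitRel.Quotient (Subgroup.zpowers e) A,
        Fintype (MulAction.orbit (Subgroup.zpowers e) ω.out) := fun ω => Fintype.ofFinite _
    have hsum : Fintype.card A
        = ∑ ω : MulAction.orbitRel.Quotient (Subgroup.zpowers e) A,
            Nat.card (MulAction.orbit (Subgroup.zpowers e) ω.out) := by
      rw [Fintype.card_congr (MulAction.selfEquivSigmaOrbits (Subgroup.zpowers e) A)]
      rw [Fintype.card_sigma]
      exact Finset.sum_congr rfl fun ω _ => (Nat.card_eq_fintype_card).symm
    -- the orbit of the fixed point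
    have hstab : Subgroup.zpowers e ≤ MulAction.stabilizer (Equiv.Perm A) x₀ :=
      Subgroup.zpowers_le.mpr (by
        show e • x₀ = x₀
        simpa [Equiv.Perm.smul_def, hcoe] using hx₀)
    set ω₀ : MulAction.orbitRel.Quotient (Subgroup.zpowers e) A := Quotient.mk'' x₀ with hω₀
    have hout₀ : (ω₀.out : A) = x₀ := by
      have hrel : ω₀.out ∈ MulAction.orbit (Subgroup.zpowers e) x₀ := by
        exact MulAction.orbitRel_apply.mp (Quotient.mk_out' x₀)
      obtain ⟨⟨g, hg⟩, hgx⟩ := hrel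
      have : g • x₀ = x₀ := hstab hg
      rw [← hgx]
      exact this
    have hcard₀ : Nat.card (MulAction.orbit (Subgroup.zpowers e) ω₀.out) = 1 := by
      rw [horbcard, hout₀]
      exact Function.minimalPeriod_eq_one_iff_isFixedPt.mpr hx₀
    have hcard_ne : ∀ ω : MulAction.orbitRel.Quotient (Subgroup.zpowers e) A, ω ≠ ω₀ →
        Nat.card (MulAction.orbit (Subgroup.zpowers e) ω.out) = a := by
      intro ω hω
      rw [horbcard]
      apply hmp
      intro hfixed
      apply hω
      have houtx : ω.out = x₀ := hx₀u _ hfixed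
      rw [hω₀, ← houtx]
      exact (Quotient.out_eq' ω).symm
    have hmem : ω₀ ∈ Finset.univ := Finset.mem_univ _
    have hsum2 : Fintype.card A = 1 + a * (Finset.univ.erase ω₀).card := by
      rw [hsum, ← Finset.add_sum_erase _ _ hmem, hcard₀]
      congr 1
      rw [Finset.sum_congr rfl fun ω hω => hcard_ne ω (Finset.ne_of_mem_erase hω)]
      rw [Finset.sum_const, smul_eq_mul, mul_comm]
    exact ⟨(Finset.univ.erase ω₀).card, by omega⟩

/-- iterated squaring term -/
def termIter : ℕ → MTerm grpdSig 1
  | 0 => .var 0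
  | (d+1) => .app () ![termIter d, termIter d]

lemma termIter_eval (mul : A → A → A) (d : ℕ) (x : Fin 1 → A) :
    (termIter d).eval (grpdInterp mul) x = (fun a => mul a a)^[d] (x 0) := by
  induction d with
  | zero => rfl
  | succ d ih =>
    show mul ((termIter d).eval (grpdInterp mul) x) ((termIter d).eval (grpdInterp mul) x)
      = (fun a => mul a a)^[d+1] (x 0)
    rw [ih, Function.iterate_succ_apply']

lemma aux_diag_branch [Nonempty A] (mul : A → A → A)
    (hmin : MinimalSpectrum A (grpdInterp mul)) :
    (∀ x y : A, mul x x = mul y y) ∨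
    ∃ a, a ∣ Fintype.card A - 1 ∧ IsIsocyclicWith (fun x => mul x x) a := by
  classical
  have hN : 0 < Fintype.card A := Fintype.card_pos
  set f : A → A := fun x => mul x x with hf
  rcases aux_card_cases (grpdInterp mul) hmin
      ((MTerm.app () ![MTerm.var 0, MTerm.var 0]) : MTerm grpdSig 2)
      ((MTerm.app () ![MTerm.var 1, MTerm.var 1]) : MTerm grpdSig 2) with hful | hcard
  · left
    intro x y
    have h := hful ![x, y]
    have : mul (![x,y] 0) (![x,y] 0) = mul (![x,y] 1) (![x,y] 1) := h
    simpa using this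
  · right
    have hinj : Function.Injective f := by
      apply aux_inj
      have hc2 : Nat.card {v : Fin 2 → A // f (v 0) = f (v 1)} * Fintype.card A
          = Fintype.card A ^ 2 := hcard
      exact le_of_eq (Nat.eq_of_mul_eq_mul_right hN (hc2.trans (pow_two _)))
    have hfix : ∀ d, 0 < d → (∀ x, f^[d] x = x) ∨ (∃! x, f^[d] x = x) := by
      intro d hd
      rcases aux_card_cases (grpdInterp mul) hmin (termIter d) (MTerm.var 0) with hful | hcard1
      · left
        intro x
        have h := hful (fun _ => x)
        rw [termIter_eval] at h
        exact h
      · right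
        have hre : Nat.card {x : Fin 1 → A //
              (termIter d).eval (grpdInterp mul) x = (MTerm.var 0).eval (grpdInterp mul) x}
            = Nat.card {x : A // f^[d] x = x} := by
          apply Nat.card_congr
          apply Equiv.trans (Equiv.subtypeEquivRight (q := fun x : Fin 1 → A => f^[d] (x 0) = x 0)
            (fun x => by rw [termIter_eval]; exact Iff.rfl))
          exact Equiv.subtypeEquiv (Equiv.funUnique (Fin 1) A) (fun v => Iff.rfl)
        rw [hre] at hcard1
        have hone : Nat.card {x : A // f^[d] x = x} = 1 := by
          have h1 : Fintype.card A ^ 1 = 1 * Fintype.card A := by ring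
          rw [h1] at hcard1
          exact Nat.eq_of_mul_eq_mul_right hN hcard1
        obtain ⟨hsub, hne⟩ := Nat.card_eq_one_iff_unique.mp hone
        obtain ⟨x₁⟩ := hne
        exact ⟨x₁.1, x₁.2, fun y hy => congrArg Subtype.val (hsub.allEq ⟨y, hy⟩ x₁)⟩
    exact aux_keyPerm f hinj hfix

end Aux

theorem stmt8 {A : Type*} [Fintype A] (mul : A → A → A)
    (hmin : MinimalSpectrum A (grpdInterp mul)) :
    (∃ c, ∀ x y, mul x y = c) ∨
    (∃ (f : A → A) (a : ℕ), a ∣ Fintype.card A - 1 ∧ IsIsocyclicWith f a ∧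
      ∀ x y, mul x y = f x) ∨
    (∃ (f : A → A) (a : ℕ), a ∣ Fintype.card A - 1 ∧ IsIsocyclicWith f a ∧
      ∀ x y, mul x y = f y) ∨
    ((∀ x y z : A, mul x y = mul x z → y = z) ∧
     (∀ x y z : A, mul y x = mul z x → y = z)) := by
  classical
  rcases isEmpty_or_nonempty A with hA | hA
  · exact Or.inr (Or.inr (Or.inr ⟨fun x => isEmptyElim x, fun x => isEmptyElim x⟩))
  have hN : 0 < Fintype.card A := Fintype.card_pos
  -- the three-variable equations
  rcases aux_card_cases (grpdInterp mul) hmin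
      ((MTerm.app () ![MTerm.var 0, MTerm.var 1]) : MTerm grpdSig 3)
      ((MTerm.app () ![MTerm.var 0, MTerm.var 2]) : MTerm grpdSig 3) with hLful | hLcard
  · -- mul x y depends only on x : mul x y = (fun x => mul x x) x
    have hdep : ∀ x y z : A, mul x y = mul x z := by
      intro x y z
      have h := hLful ![x, y, z]
      have h' : mul (![x,y,z] 0) (![x,y,z] 1) = mul (![x,y,z] 0) (![x,y,z] 2) := h
      simpa using h'
    have hfeq : ∀ x y : A, mul x y = mul x x := fun x y => hdep x y x
    rcases aux_diag_branch mul hmin with hconst | ⟨a, hdvd, hiso⟩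
    · left
      obtain ⟨c⟩ := hA
      exact ⟨mul c c, fun x y => (hfeq x y).trans (hconst x c)⟩
    · right; left
      exact ⟨fun x => mul x x, a, hdvd, hiso, fun x y => hfeq x y⟩
  · -- left cancellative
    have hLC : ∀ x y z : A, mul x y = mul x z → y = z := by
      apply aux_left_cancel (mul := mul)
      exact le_of_eq (Nat.eq_of_mul_eq_mul_right hN (hLcard.trans (pow_succ (Fintype.card A) 2)))
    rcases aux_card_cases (grpdInterp mul) hmin
        ((MTerm.app () ![MTerm.var 1, MTerm.var 0]) : MTerm grpdSig 3)
        ((MTerm.app () ![MTerm.var 2, MTerm.var 0]) : MTerm grpdSig 3) with hRful | hRcard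
    · -- mul x y depends only on y
      have hdep : ∀ x y z : A, mul y x = mul z x := by
        intro x y z
        have h := hRful ![x, y, z]
        have h' : mul (![x,y,z] 1) (![x,y,z] 0) = mul (![x,y,z] 2) (![x,y,z] 0) := h
        simpa using h'
      have hfeq : ∀ x y : A, mul x y = mul y y := fun x y => hdep y x y
      rcases aux_diag_branch mul hmin with hconst | ⟨a, hdvd, hiso⟩
      · left
        obtain ⟨c⟩ := hA
        exact ⟨mul c c, fun x y => (hfeq x y).trans (hconst y c)⟩
      · right; right; left
        exact ⟨fun x => mul x x, a, hdvd, hiso, fun x y => hfeq x y⟩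
    · -- right cancellative
      have hRC : ∀ x y z : A, mul y x = mul z x → y = z := by
        have hc : Nat.card {v : Fin 3 → A // mul (v 1) (v 0) = mul (v 2) (v 0)}
            ≤ Fintype.card A ^ 2 :=
          le_of_eq (Nat.eq_of_mul_eq_mul_right hN (hRcard.trans (pow_succ (Fintype.card A) 2)))
        exact fun x y z h => aux_left_cancel (mul := fun p q => mul q p) hc x y z h
      exact Or.inr (Or.inr (Or.inr ⟨hLC, hRC⟩))
end

section
/- Every finite groupoid with minimal spectrum is either commutative or anticommutative (i.e., xy = yx implies x = y). -/
/-! The equation `x * y ≈ y * x` holds on the whole diagonal, so it has at least `n` solutions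
among the `n²` pairs. Minimal spectrum leaves two options: all `n²` pairs are solutions, or
exactly `n` are, and then the solutions are precisely the diagonal pairs. -/

section EqProb

variable {σ : MSignature} {A : Type*} [Finite A] [Nonempty A]
  {interp : (f : σ.ops) → (Fin (σ.arity f) → A) → A} {k : ℕ} {t t' : MTerm σ k}

theorem eqProb_eq_one_iff :
    eqProb A interp t t' = 1 ↔ ∀ x, t.eval interp x = t'.eval interp x := by
  have hcard : Nat.card (Fin k → A) = Nat.card A ^ k := by simp [Nat.card_fun]
  have hpos : 0 < Nat.card A := Nat.card_pos
  rw [eqProb, div_eq_one_iff_eq (by positivity)]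
  norm_cast
  rw [← hcard]
  refine ⟨fun h x => ?_, fun h => Nat.card_congr (Equiv.subtypeUnivEquiv h)⟩
  by_contra hx
  exact (Finite.card_subtype_lt (p := fun x => t.eval interp x = t'.eval interp x) hx).ne h

theorem card_solutions_mul_card_of_eqProb_eq_inv_card
    (h : eqProb A interp t t' = 1 / (Nat.card A : ℚ)) :
    Nat.card {x // t.eval interp x = t'.eval interp x} * Nat.card A = Nat.card A ^ k := by
  have hpos : 0 < Nat.card A := Nat.card_pos
  rw [eqProb, div_eq_div_iff (by positivity) (by positivity), one_mul] at h
  exact_mod_cast h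

end EqProb

theorem eq_of_card_le_of_reflexive {A : Type*} [Finite A] {R : A → A → Prop} (hR : ∀ a, R a a)
    (hcard : Nat.card {x : Fin 2 → A // R (x 0) (x 1)} ≤ Nat.card A) {a b : A} (hab : R a b) :
    a = b := by
  let diag : A → {x : Fin 2 → A // R (x 0) (x 1)} := fun c => ⟨![c, c], hR c⟩
  have hinj : Function.Injective diag := fun c d h => by
    simpa [diag] using congrFun (congrArg Subtype.val h) 0
  obtain ⟨c, hc⟩ := (hinj.bijective_of_nat_card_le hcard).2 ⟨![a, b], hab⟩
  have h0 := congrFun (congrArg Subtype.val hc) 0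
  have h1 := congrFun (congrArg Subtype.val hc) 1
  simp only [diag, Matrix.cons_val_zero, Matrix.cons_val_one] at h0 h1
  exact h0.symm.trans h1

def grpdMulTerm {k : ℕ} (i j : Fin k) : MTerm grpdSig k := .app () ![.var i, .var j]

@[simp]
theorem eval_grpdMulTerm {A : Type*} (mul : A → A → A) {k : ℕ} (i j : Fin k) (x : Fin k → A) :
    (grpdMulTerm i j).eval (grpdInterp mul) x = mul (x i) (x j) := rfl

theorem stmt9 {A : Type*} [Fintype A] (mul : A → A → A)
    (hmin : MinimalSpectrum A (grpdInterp mul)) :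
    (∀ x y : A, mul x y = mul y x) ∨ (∀ x y : A, mul x y = mul y x → x = y) := by
  rcases isEmpty_or_nonempty A with _ | _
  · exact Or.inl fun x => isEmptyElim x
  rcases hmin 2 (grpdMulTerm 0 1) (grpdMulTerm 1 0) with h | h
  · refine Or.inl fun x y => ?_
    simpa using eqProb_eq_one_iff.mp h ![x, y]
  · refine Or.inr fun x y => eq_of_card_le_of_reflexive (R := fun a b => mul a b = mul b a)
      (fun _ => rfl) ?_
    have hcard := card_solutions_mul_card_of_eqProb_eq_inv_card h
    simp only [eval_grpdMulTerm] at hcard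
    have hpos : 0 < Nat.card A := Nat.card_pos
    rw [sq] at hcard
    exact (Nat.eq_of_mul_eq_mul_right hpos hcard).le
end

section
/- In a finite groupoid with minimal spectrum, the squaring map x ↦ x² is either constant or an isocyclic permutation; in particular, if there exist two distinct idempotent elements, then every element is idempotent. -/
section Aux

open Function

/-- term giving the `j`-th iterate of squaring on one variable -/
private def sqT : ℕ → MTerm grpdSig 1
  | 0 => .var 0
  | j + 1 => .app () (fun _ => sqT j)

private lemma sqT_eval {A : Type*} (mul : A → A → A) (j : ℕ) (x : Fin 1 → A) :
    (sqT j).eval (grpdInterp mul) x = (fun a => mul a a)^[j] (x 0) := by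
  induction j with
  | zero => rfl
  | succ j ih =>
    show mul ((sqT j).eval (grpdInterp mul) x) ((sqT j).eval (grpdInterp mul) x) = _
    rw [ih, Function.iterate_succ_apply']

private lemma fixcount {A : Type*} [Fintype A] [Nonempty A] (mul : A → A → A)
    (hmin : MinimalSpectrum A (grpdInterp mul)) (j : ℕ) :
    (∀ x : A, (fun a => mul a a)^[j] x = x) ∨
      (∃! x : A, (fun a => mul a a)^[j] x = x) := by
  classical
  set f : A → A := fun a => mul a a with hf
  have hn : (0 : ℕ) < Nat.card A := Nat.card_pos
  have hcongr : Nat.card {x : Fin 1 → A //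
      (sqT j).eval (grpdInterp mul) x = (MTerm.var 0).eval (grpdInterp mul) x}
      = Nat.card {a : A // f^[j] a = a} := by
    refine Nat.card_congr ⟨fun x => ⟨x.1 0, by have := x.2; rwa [sqT_eval] at this⟩,
      fun a => ⟨fun _ => a.1, by show (sqT j).eval _ _ = _; rw [sqT_eval]; exact a.2⟩,
      fun x => ?_, fun a => rfl⟩
    ext i
    exact congrArg x.1 (Subsingleton.elim 0 i)
  have hN : Nat.card {a : A // f^[j] a = a} = Nat.card A ∨
      Nat.card {a : A // f^[j] a = a} = 1 := by
    have hq : (0:ℚ) < (Nat.card A : ℚ) := by exact_mod_cast hn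
    rcases hmin 1 (sqT j) (.var 0) with h | h
    · left
      unfold eqProb at h
      rw [hcongr, pow_one, div_eq_one_iff_eq hq.ne'] at h
      exact_mod_cast h
    · right
      unfold eqProb at h
      rw [hcongr, pow_one, div_eq_div_iff hq.ne' hq.ne', one_mul] at h
      have := mul_right_cancel₀ hq.ne' (h.trans (one_mul ((Nat.card A : ℚ))).symm)
      exact_mod_cast this
  rcases hN with h | h
  · left
    intro x
    by_contra hx
    have hlt : Fintype.card {a : A // f^[j] a = a} < Fintype.card A :=
      Fintype.card_subtype_lt (x := x) hx
    rw [Nat.card_eq_fintype_card, Nat.card_eq_fintype_card] at h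
    omega
  · right
    rw [Nat.card_eq_one_iff_unique] at h
    obtain ⟨hsub, ⟨x⟩⟩ := h
    exact ⟨x.1, x.2, fun y hy => congrArg Subtype.val (@Subsingleton.elim _ hsub ⟨y, hy⟩ x)⟩

/-- From the two-variable equation `x·x ≈ y·y`: squaring is constant or injective. -/
private lemma const_or_inj {A : Type*} [Fintype A] [Nonempty A] (mul : A → A → A)
    (hmin : MinimalSpectrum A (grpdInterp mul)) :
    (∃ c, ∀ x, mul x x = c) ∨ Function.Injective (fun a : A => mul a a) := by
  classical
  set f : A → A := fun a => mul a a with hf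
  set t : MTerm grpdSig 2 := .app () (fun _ => .var 0)
  set t' : MTerm grpdSig 2 := .app () (fun _ => .var 1)
  have heval : ∀ x : Fin 2 → A,
      (t.eval (grpdInterp mul) x = t'.eval (grpdInterp mul) x) ↔ (f (x 0) = f (x 1)) :=
    fun x => Iff.rfl
  have hn : (0 : ℕ) < Nat.card A := Nat.card_pos
  have hq : (0:ℚ) < (Nat.card A : ℚ) := by exact_mod_cast hn
  have hfn : Nat.card (Fin 2 → A) = Nat.card A ^ 2 := by
    rw [Nat.card_fun]
    simp [Nat.card_eq_fintype_card]
  rcases hmin 2 t t' with h | h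
  · left
    unfold eqProb at h
    rw [div_eq_one_iff_eq (pow_ne_zero 2 hq.ne')] at h
    have hcard : Nat.card {x : Fin 2 → A // t.eval (grpdInterp mul) x = t'.eval (grpdInterp mul) x}
        = Nat.card (Fin 2 → A) := by
      rw [hfn]
      exact_mod_cast h
    have hall : ∀ x : Fin 2 → A, f (x 0) = f (x 1) := by
      intro x
      by_contra hx
      have hlt : Fintype.card {x : Fin 2 → A //
          t.eval (grpdInterp mul) x = t'.eval (grpdInterp mul) x} < Fintype.card (Fin 2 → A) :=
        Fintype.card_subtype_lt (x := x) hx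
      rw [Nat.card_eq_fintype_card, Nat.card_eq_fintype_card] at hcard
      omega
    obtain ⟨a⟩ := ‹Nonempty A›
    exact ⟨f a, fun x => hall ![x, a]⟩
  · right
    unfold eqProb at h
    rw [div_eq_div_iff (pow_ne_zero 2 hq.ne') hq.ne', one_mul, sq] at h
    have hcard : Nat.card {x : Fin 2 → A //
        t.eval (grpdInterp mul) x = t'.eval (grpdInterp mul) x} = Nat.card A := by
      have := mul_right_cancel₀ hq.ne' h
      exact_mod_cast this
    intro a b hab
    by_contra hne
    let g : A → {x : Fin 2 → A // t.eval (grpdInterp mul) x = t'.eval (grpdInterp mul) x} :=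
      fun c => ⟨fun _ => c, rfl⟩
    have hg : Function.Injective g := by
      intro c d hcd
      exact congrFun (congrArg Subtype.val hcd) 0
    have hw : (⟨![a, b], hab⟩ : {x : Fin 2 → A //
        t.eval (grpdInterp mul) x = t'.eval (grpdInterp mul) x}) ∉ Set.range g := by
      rintro ⟨c, hc⟩
      have h0 : c = a := congrFun (congrArg Subtype.val hc) 0
      have h1 : c = b := congrFun (congrArg Subtype.val hc) 1
      exact hne (h0 ▸ h1)
    have hlt := Fintype.card_lt_of_injective_of_notMem g hg hw
    rw [Nat.card_eq_fintype_card, Nat.card_eq_fintype_card] at hcard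
    omega

end Aux

open Function in
theorem stmt10 {A : Type*} [Fintype A] (mul : A → A → A)
    (hmin : MinimalSpectrum A (grpdInterp mul)) :
    ((∃ c, ∀ x, mul x x = c) ∨ IsIsocyclic (fun x => mul x x)) ∧
    (∀ x y : A, mul x x = x → mul y y = y → x ≠ y → ∀ z : A, mul z z = z) := by
  classical
  set f : A → A := fun a => mul a a with hf
  rcases isEmpty_or_nonempty A with hA | hA
  · refine ⟨Or.inr ⟨⟨fun a b _ => Subsingleton.elim a b, fun a => isEmptyElim a⟩,
      Or.inl (funext fun x => isEmptyElim x)⟩, fun x => isEmptyElim x⟩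
  have hmain : (∃ c, ∀ x, mul x x = c) ∨ IsIsocyclic f := by
    rcases const_or_inj mul hmin with hc | hinj
    · exact Or.inl hc
    right
    have hbij : Function.Bijective f := (Finite.injective_iff_bijective).mp hinj
    refine ⟨hbij, ?_⟩
    by_cases hid : ∀ x, f x = x
    · exact Or.inl (funext hid)
    right
    push_neg at hid
    obtain ⟨x0, hx0⟩ := hid
    -- unique fixed point of f
    have hfix1 : ∃! z : A, f z = z := by
      rcases fixcount mul hmin 1 with h | h
      · exact absurd (by simpa using h x0) hx0
      · simpa using h
    obtain ⟨z, hz, hzu⟩ := hfix1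
    -- every point is periodic
    have hper : ∀ x : A, Function.IsPeriodicPt f (orderOf (Equiv.ofBijective f hbij)) x := by
      intro x
      have h1 := DFunLike.congr_fun (pow_orderOf_eq_one (Equiv.ofBijective f hbij)) x
      rw [Equiv.Perm.coe_pow] at h1
      exact h1
    have hord : 0 < orderOf (Equiv.ofBijective f hbij) := orderOf_pos _
    have hperpos : ∀ x : A, 0 < Function.minimalPeriod f x :=
      fun x => (hper x).minimalPeriod_pos hord
    -- minimal period among non-fixed points
    set T : Finset ℕ := (Finset.univ.filter (fun x : A => f x ≠ x)).image
      (Function.minimalPeriod f) with hT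
    have hTne : T.Nonempty :=
      ⟨Function.minimalPeriod f x0, Finset.mem_image_of_mem _ (by simp [hx0])⟩
    set a : ℕ := T.min' hTne with ha
    obtain ⟨y, hy, hya⟩ := Finset.mem_image.mp (T.min'_mem hTne)
    have hyne : f y ≠ y := (Finset.mem_filter.mp hy).2
    have ha1 : 1 < a := by
      have ha0 : 0 < a := by rw [ha, ← hya]; exact hperpos y
      have hane : a ≠ 1 := by
        intro h1
        exact hyne (Function.minimalPeriod_eq_one_iff_isFixedPt.mp (by rw [hya, ← ha, h1]))
      omega
    -- f^[a] = id
    have hfa : ∀ w : A, f^[a] w = w := by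
      rcases fixcount mul hmin a with h | h
      · exact h
      · exfalso
        obtain ⟨w, hw, hwu⟩ := h
        have hyz : y ≠ z := fun h => hyne (h ▸ hz)
        have hyfix : f^[a] y = y := by
          rw [ha, ← hya]; exact Function.iterate_minimalPeriod
        have hzfix : f^[a] z = z := Function.IsFixedPt.iterate hz a
        exact hyz ((hwu y hyfix).trans (hwu z hzfix).symm)
    refine ⟨a, ha1, ⟨z, hz, hzu⟩, fun x hx => ?_⟩
    have hdvd : Function.minimalPeriod f x ∣ a :=
      Function.IsPeriodicPt.minimalPeriod_dvd (hfa x)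
    have hle : Function.minimalPeriod f x ≤ a := Nat.le_of_dvd (by omega) hdvd
    have hge : a ≤ Function.minimalPeriod f x :=
      T.min'_le _ (Finset.mem_image_of_mem _ (by simp [hx]))
    omega
  refine ⟨hmain, ?_⟩
  intro x y hx hy hxy z
  rcases hmain with ⟨c, hc⟩ | ⟨hbij, hiso⟩
  · exact absurd ((hc x ▸ hx).symm.trans (hc y ▸ hy)) hxy
  · rcases hiso with hid | ⟨a, _, ⟨w, hw, hwu⟩, _⟩
    · exact congrFun hid z
    · exact absurd ((hwu x hx).trans (hwu y hy).symm) hxy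
end

section
/- The only finite semigroups of order n with minimal spectrum are: the constant semigroup C_n (xy = c for all x,y), the left-projection semigroup (xy = x), the right-projection semigroup (xy = y), and elementary abelian groups (Z_p)^m with p prime and n = p^m. -/
/-! ### Auxiliary lemmas -/

section Aux

def MyB {k : ℕ} (t1 t2 : MTerm grpdSig k) : MTerm grpdSig k := .app () ![t1, t2]

lemma eval_MyB {A : Type*} (mul : A → A → A) {k : ℕ} (t1 t2 : MTerm grpdSig k)
    (v : Fin k → A) :
    (MyB t1 t2).eval (grpdInterp mul) v
      = mul (t1.eval (grpdInterp mul) v) (t2.eval (grpdInterp mul) v) := rfl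

lemma eval_var {A : Type*} (mul : A → A → A) {k : ℕ} (i : Fin k) (v : Fin k → A) :
    (MTerm.var i).eval (grpdInterp mul) v = v i := rfl

def MyPW {k : ℕ} (i : Fin k) : ℕ → MTerm grpdSig k
  | 0 => .var i
  | m + 1 => MyB (MyPW i m) (.var i)

lemma eval_MyPW {A : Type*} [Monoid A] (mul : A → A → A)
    (hmul : ∀ x y : A, mul x y = x * y) {k : ℕ} (i : Fin k) (m : ℕ) (v : Fin k → A) :
    (MyPW i m).eval (grpdInterp mul) v = (v i) ^ (m + 1) := by
  induction m with
  | zero => rw [MyPW, eval_var, pow_one]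
  | succ m ih => rw [MyPW, eval_MyB, ih, eval_var, hmul, ← pow_succ]

lemma key_lemma {A : Type*} [Fintype A] [Nonempty A] (mul : A → A → A)
    (hmin : MinimalSpectrum A (grpdInterp mul)) {k : ℕ} (t t' : MTerm grpdSig k) :
    (∀ v, t.eval (grpdInterp mul) v = t'.eval (grpdInterp mul) v) ∨
      Nat.card {v : Fin k → A // t.eval (grpdInterp mul) v = t'.eval (grpdInterp mul) v}
        * Nat.card A = Nat.card A ^ k := by
  have hn : 0 < Nat.card A := Nat.card_pos
  have hnQ : ((Nat.card A : ℚ)) ≠ 0 := by exact_mod_cast hn.ne'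
  have hnkQ : ((Nat.card A : ℚ)) ^ k ≠ 0 := pow_ne_zero _ hnQ
  rcases hmin k t t' with h | h
  · left
    unfold eqProb at h
    rw [div_eq_one_iff_eq hnkQ] at h
    have hc : Nat.card {v : Fin k → A // t.eval (grpdInterp mul) v = t'.eval (grpdInterp mul) v}
        = Nat.card A ^ k := by exact_mod_cast h
    have hcard : Nat.card {v : Fin k → A // t.eval (grpdInterp mul) v = t'.eval (grpdInterp mul) v}
        = Nat.card (Fin k → A) := by
      rw [hc, Nat.card_fun, Nat.card_eq_fintype_card (α := Fin k), Fintype.card_fin]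
    have hbij := (Nat.bijective_iff_injective_and_card
      (Subtype.val : {v : Fin k → A // t.eval (grpdInterp mul) v = t'.eval (grpdInterp mul) v}
        → (Fin k → A))).mpr ⟨Subtype.val_injective, hcard⟩
    intro v
    obtain ⟨x, hx⟩ := hbij.2 v
    exact hx ▸ x.2
  · right
    unfold eqProb at h
    rw [div_eq_div_iff hnkQ hnQ, one_mul] at h
    exact_mod_cast h

lemma eq_of_superset {α : Type*} [Finite α] {p q : α → Prop} (hpq : ∀ a, p a → q a)
    (hcard : Nat.card {a // q a} ≤ Nat.card {a // p a}) {a : α} (ha : q a) : p a := by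
  have hinj : Function.Injective (fun x : {a // p a} => (⟨x.1, hpq _ x.2⟩ : {a // q a})) := by
    intro x y h
    exact Subtype.ext (congrArg (fun z : {a // q a} => z.1) h)
  have hbij := (Nat.bijective_iff_injective_and_card _).mpr
    ⟨hinj, le_antisymm (Nat.card_le_card_of_injective _ hinj) hcard⟩
  obtain ⟨x, hx⟩ := hbij.2 ⟨a, ha⟩
  have hxa : x.1 = a := congrArg (fun z : {a // q a} => z.1) hx
  exact hxa ▸ x.2

lemma left_case {A : Type*} [Fintype A] [Nonempty A] (mul : A → A → A)
    (hmin : MinimalSpectrum A (grpdInterp mul)) :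
    (∀ x y z : A, mul x y = mul x z) ∨ (∀ x y z : A, mul x y = mul x z → y = z) := by
  rcases key_lemma mul hmin (k := 3) (MyB (.var 0) (.var 1)) (MyB (.var 0) (.var 2)) with h | h
  · left; intro x y z; exact h ![x, y, z]
  · right
    have e3 : {v : Fin 3 → A // v 2 = v 1} ≃ (A × A) :=
      { toFun := fun v => (v.1 0, v.1 1)
        invFun := fun p => ⟨![p.1, p.2, p.2], rfl⟩
        left_inv := fun v => Subtype.ext (by funext i; fin_cases i <;> simp [v.2])
        right_inv := fun p => rfl }
    have hD : Nat.card {v : Fin 3 → A // v 2 = v 1} = Nat.card A ^ 2 := by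
      rw [Nat.card_congr e3, Nat.card_prod, pow_two]
    have hS : Nat.card {v : Fin 3 → A // mul (v 0) (v 1) = mul (v 0) (v 2)}
        * Nat.card A = Nat.card A ^ 3 := h
    rw [pow_succ] at hS
    have hS' := Nat.eq_of_mul_eq_mul_right Nat.card_pos hS
    intro x y z hxy
    have hz := eq_of_superset (p := fun v : Fin 3 → A => v 2 = v 1)
      (q := fun v : Fin 3 → A => mul (v 0) (v 1) = mul (v 0) (v 2))
      (fun v hv => by show mul (v 0) (v 1) = mul (v 0) (v 2); rw [show v 2 = v 1 from hv]) (le_of_eq (hS'.trans hD.symm)) (a := ![x, y, z]) hxy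
    exact hz.symm

lemma right_case {A : Type*} [Fintype A] [Nonempty A] (mul : A → A → A)
    (hmin : MinimalSpectrum A (grpdInterp mul)) :
    (∀ x y z : A, mul x z = mul y z) ∨ (∀ x y z : A, mul x z = mul y z → x = y) := by
  rcases key_lemma mul hmin (k := 3) (MyB (.var 0) (.var 2)) (MyB (.var 1) (.var 2)) with h | h
  · left; intro x y z; exact h ![x, y, z]
  · right
    have e3 : {v : Fin 3 → A // v 1 = v 0} ≃ (A × A) :=
      { toFun := fun v => (v.1 0, v.1 2)
        invFun := fun p => ⟨![p.1, p.1, p.2], rfl⟩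
        left_inv := fun v => Subtype.ext (by funext i; fin_cases i <;> simp [v.2])
        right_inv := fun p => rfl }
    have hD : Nat.card {v : Fin 3 → A // v 1 = v 0} = Nat.card A ^ 2 := by
      rw [Nat.card_congr e3, Nat.card_prod, pow_two]
    have hS : Nat.card {v : Fin 3 → A // mul (v 0) (v 2) = mul (v 1) (v 2)}
        * Nat.card A = Nat.card A ^ 3 := h
    rw [pow_succ] at hS
    have hS' := Nat.eq_of_mul_eq_mul_right Nat.card_pos hS
    intro x y z hxy
    have hz := eq_of_superset (p := fun v : Fin 3 → A => v 1 = v 0)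
      (q := fun v : Fin 3 → A => mul (v 0) (v 2) = mul (v 1) (v 2))
      (fun v hv => by show mul (v 0) (v 2) = mul (v 1) (v 2); rw [show v 1 = v 0 from hv]) (le_of_eq (hS'.trans hD.symm)) (a := ![x, y, z]) hxy
    exact hz.symm

lemma prod_case {A : Type*} [Fintype A] [Nonempty A] (mul : A → A → A)
    (hmin : MinimalSpectrum A (grpdInterp mul)) :
    (∀ x y z w : A, mul x y = mul z w) ∨
      Nat.card {v : Fin 4 → A // mul (v 0) (v 1) = mul (v 2) (v 3)} = Nat.card A ^ 3 := by
  rcases key_lemma mul hmin (k := 4) (MyB (.var 0) (.var 1)) (MyB (.var 2) (.var 3)) with h | h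
  · left; intro x y z w; exact h ![x, y, z, w]
  · right
    have hS : Nat.card {v : Fin 4 → A // mul (v 0) (v 1) = mul (v 2) (v 3)}
        * Nat.card A = Nat.card A ^ 4 := h
    rw [pow_succ] at hS
    exact Nat.eq_of_mul_eq_mul_right Nat.card_pos hS

lemma exists_group_structure {A : Type*} [Finite A] [Nonempty A] (mul : A → A → A)
    (hassoc : ∀ x y z : A, mul (mul x y) z = mul x (mul y z))
    (hl : ∀ x y z : A, mul x y = mul x z → y = z)
    (hr : ∀ x y z : A, mul x z = mul y z → x = y) :
    ∃ e : A, (∀ x, mul e x = x) ∧ ∀ x, ∃ y, mul y x = e := by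
  have hls : ∀ x : A, Function.Surjective (mul x) := fun x =>
    Finite.injective_iff_surjective.mp (fun y z h => hl x y z h)
  have hrs : ∀ z : A, Function.Surjective (fun x => mul x z) := fun z =>
    Finite.injective_iff_surjective.mp (fun x y h => hr x y z h)
  have a : A := Classical.arbitrary A
  obtain ⟨e, he⟩ := hrs a a
  have he' : mul e a = a := he
  have hleft : ∀ x, mul e x = x := by
    intro x
    obtain ⟨c, hc⟩ := hls a x
    rw [← hc, ← hassoc, he']
  exact ⟨e, hleft, fun x => hrs x e⟩

end Aux

theorem stmt15 {A : Type*} [Fintype A] (mul : A → A → A)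
    (hassoc : ∀ x y z : A, mul (mul x y) z = mul x (mul y z))
    (hmin : MinimalSpectrum A (grpdInterp mul)) :
    (∃ c, ∀ x y, mul x y = c) ∨
    (∀ x y : A, mul x y = x) ∨
    (∀ x y : A, mul x y = y) ∨
    (∃ (p m : ℕ), p.Prime ∧ Fintype.card A = p ^ m ∧
      ∃ e : A ≃ (Fin m → ZMod p), ∀ x y, e (mul x y) = e x + e y) := by
  classical
  rcases Nat.lt_or_ge (Fintype.card A) 2 with hsmall | hbig
  · rcases Nat.lt_or_ge (Fintype.card A) 1 with h0 | h1
    · have hE : IsEmpty A := Fintype.card_eq_zero_iff.mp (Nat.lt_one_iff.mp h0)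
      exact Or.inr (Or.inl fun x y => (hE.false x).elim)
    · have hc1 : Fintype.card A = 1 := le_antisymm (by omega) h1
      obtain ⟨c, hc⟩ := Fintype.card_eq_one_iff.mp hc1
      exact Or.inl ⟨c, fun x y => hc _⟩
  have hne : Nonempty A := Fintype.card_pos_iff.mp (by omega)
  -- Left analysis
  rcases left_case mul hmin with hLconst | hl
  · -- mul x y = mul x x
    have hg : ∀ x y : A, mul x y = mul x x := fun x y => hLconst x y x
    rcases prod_case mul hmin with hP | hP
    · refine Or.inl ⟨mul (Classical.arbitrary A) (Classical.arbitrary A), fun x y => hP _ _ _ _⟩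
    · have e4 : {v : Fin 4 → A // v 2 = v 0} ≃ (A × A × A) :=
        { toFun := fun v => (v.1 0, v.1 1, v.1 3)
          invFun := fun p => ⟨![p.1, p.2.1, p.1, p.2.2], rfl⟩
          left_inv := fun v => Subtype.ext (by funext i; fin_cases i <;> simp [v.2])
          right_inv := fun p => rfl }
      have hD : Nat.card {v : Fin 4 → A // v 2 = v 0} = Nat.card A ^ 3 := by
        rw [Nat.card_congr e4, Nat.card_prod, Nat.card_prod, pow_succ, pow_two, mul_assoc]
      have hginj : ∀ x z : A, mul x x = mul z z → x = z := by
        intro x z hxz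
        have hz := eq_of_superset (p := fun v : Fin 4 → A => v 2 = v 0)
          (q := fun v : Fin 4 → A => mul (v 0) (v 1) = mul (v 2) (v 3))
          (fun v hv => by
            show mul (v 0) (v 1) = mul (v 2) (v 3)
            rw [hg (v 0) (v 1), hg (v 2) (v 3), show v 2 = v 0 from hv])
          (le_of_eq (hP.trans hD.symm)) (a := ![x, x, z, z]) hxz
        exact (show z = x from hz).symm
      have hfix : ∀ x : A, mul (mul x x) (mul x x) = mul x x := by
        intro x
        rw [hassoc]
        exact hg x _
      refine Or.inr (Or.inl fun x y => ?_)
      rw [hg x y, hginj (mul x x) x (hfix x)]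
  rcases right_case mul hmin with hRconst | hr
  · -- mul x y = mul y y
    have hg : ∀ x y : A, mul x y = mul y y := fun x y => hRconst x y y
    rcases prod_case mul hmin with hP | hP
    · refine Or.inl ⟨mul (Classical.arbitrary A) (Classical.arbitrary A), fun x y => hP _ _ _ _⟩
    · have e4 : {v : Fin 4 → A // v 3 = v 1} ≃ (A × A × A) :=
        { toFun := fun v => (v.1 0, v.1 1, v.1 2)
          invFun := fun p => ⟨![p.1, p.2.1, p.2.2, p.2.1], rfl⟩
          left_inv := fun v => Subtype.ext (by funext i; fin_cases i <;> simp [v.2])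
          right_inv := fun p => rfl }
      have hD : Nat.card {v : Fin 4 → A // v 3 = v 1} = Nat.card A ^ 3 := by
        rw [Nat.card_congr e4, Nat.card_prod, Nat.card_prod, pow_succ, pow_two, mul_assoc]
      have hginj : ∀ x z : A, mul x x = mul z z → x = z := by
        intro x z hxz
        have hz := eq_of_superset (p := fun v : Fin 4 → A => v 3 = v 1)
          (q := fun v : Fin 4 → A => mul (v 0) (v 1) = mul (v 2) (v 3))
          (fun v hv => by
            show mul (v 0) (v 1) = mul (v 2) (v 3)
            rw [hg (v 0) (v 1), hg (v 2) (v 3), show v 3 = v 1 from hv])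
          (le_of_eq (hP.trans hD.symm)) (a := ![x, x, z, z]) hxz
        exact (show z = x from hz).symm
      have hfix : ∀ z : A, mul (mul z z) (mul z z) = mul z z := by
        intro z
        have h1 : mul (mul z z) z = mul z (mul z z) := hassoc z z z
        have h2 : mul (mul z z) z = mul z z := hg (mul z z) z
        have h3 : mul z (mul z z) = mul (mul z z) (mul z z) := hg z (mul z z)
        rw [← h3, ← h1, h2]
      refine Or.inr (Or.inr (Or.inl fun x y => ?_))
      rw [hg x y, hginj (mul y y) y (hfix y)]
  -- Cancellative case: group
  obtain ⟨e, hone, hinv⟩ := exists_group_structure mul hassoc hl hr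
  letI instMul : Mul A := ⟨mul⟩
  letI instOne : One A := ⟨e⟩
  letI instInv : Inv A := ⟨fun x => Classical.choose (hinv x)⟩
  letI grp : Group A := Group.ofLeftAxioms hassoc hone (fun x => Classical.choose_spec (hinv x))
  have hmul : ∀ x y : A, mul x y = x * y := fun _ _ => rfl
  -- commutativity
  have hcomm : ∀ x y : A, mul x y = mul y x := by
    rcases key_lemma mul hmin (k := 2) (MyB (.var 0) (.var 1)) (MyB (.var 1) (.var 0)) with h | h
    · intro x y; exact h ![x, y]
    · exfalso
      have hc : Nat.card {v : Fin 2 → A // mul (v 0) (v 1) = mul (v 1) (v 0)}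
          * Nat.card A = Nat.card A ^ 2 := h
      rw [pow_two] at hc
      have hc' := Nat.eq_of_mul_eq_mul_right Nat.card_pos hc
      obtain ⟨b, hb⟩ := Fintype.exists_ne_of_one_lt_card hbig e
      set S := {v : Fin 2 → A // mul (v 0) (v 1) = mul (v 1) (v 0)} with hSdef
      have φinj : Function.Injective (fun s : A ⊕ {x : A // x ≠ e} =>
          Sum.elim (fun x => (⟨![x, x], rfl⟩ : S))
            (fun x => (⟨![x.1, e], show mul x.1 e = mul e x.1 from
              (mul_one x.1).trans (one_mul x.1).symm⟩ : S)) s) := by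
        rintro (x | x) (y | y) hxy
        · have h0 : x = y := congrArg (fun s : S => s.1 0) hxy
          exact congrArg Sum.inl h0
        · have hx0 : x = y.1 := congrArg (fun s : S => s.1 0) hxy
          have hx1 : x = e := congrArg (fun s : S => s.1 1) hxy
          exact absurd (hx0 ▸ hx1) y.2
        · have hx0 : x.1 = y := congrArg (fun s : S => s.1 0) hxy
          have hx1 : e = y := congrArg (fun s : S => s.1 1) hxy
          exact absurd (hx1 ▸ hx0) x.2
        · have h0 : x.1 = y.1 := congrArg (fun s : S => s.1 0) hxy
          exact congrArg Sum.inr (Subtype.ext h0)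
      have hle := Nat.card_le_card_of_injective _ φinj
      rw [Nat.card_sum, hc'] at hle
      have hpos : 0 < Nat.card {x : A // x ≠ e} := Nat.card_pos_iff.mpr ⟨⟨⟨b, hb⟩⟩, inferInstance⟩
      have hApos : 0 < Nat.card A := Nat.card_pos
      omega
  letI cg : CommGroup A := { grp with mul_comm := hcomm }
  -- the prime
  set n := Fintype.card A with hn
  set p := n.minFac with hpdef
  have hp : p.Prime := Nat.minFac_prime (by omega)
  have hpdvd : p ∣ n := Nat.minFac_dvd n
  haveI : Fact p.Prime := ⟨hp⟩
  have hp1 : p - 1 + 1 = p := Nat.succ_pred_eq_of_pos hp.pos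
  have heval : ∀ (i : Fin 2) (v : Fin 2 → A),
      (MyPW i (p - 1)).eval (grpdInterp mul) v = (v i) ^ p := by
    intro i v
    rw [eval_MyPW mul hmul, hp1]
  have hpow : ∀ x : A, x ^ p = 1 := by
    rcases key_lemma mul hmin (k := 2) (MyPW 0 (p - 1)) (MyPW 1 (p - 1)) with h | h
    · intro x
      have h1 := h ![x, 1]
      rw [heval 0, heval 1] at h1
      simpa using h1
    · exfalso
      obtain ⟨a, ha⟩ := exists_prime_orderOf_dvd_card p hpdvd
      have ha1 : a ≠ 1 := by
        intro h1
        rw [h1, orderOf_one] at ha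
        exact hp.one_lt.ne' ha.symm
      have hap : a ^ p = 1 := ha ▸ pow_orderOf_eq_one a
      have etr : {v : Fin 2 → A // (MyPW (0 : Fin 2) (p - 1)).eval (grpdInterp mul) v
            = (MyPW (1 : Fin 2) (p - 1)).eval (grpdInterp mul) v}
          ≃ {v : Fin 2 → A // (v 0) ^ p = (v 1) ^ p} :=
        Equiv.subtypeEquivRight (fun v => by rw [heval 0, heval 1])
      rw [Nat.card_congr etr, pow_two] at h
      have hc' := Nat.eq_of_mul_eq_mul_right Nat.card_pos h
      set S := {v : Fin 2 → A // (v 0) ^ p = (v 1) ^ p} with hSdef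
      have φinj : Function.Injective (fun s : A ⊕ A =>
          Sum.elim (fun x => (⟨![x, x], rfl⟩ : S))
            (fun x => (⟨![x, x * a], show x ^ p = (x * a) ^ p by
              rw [mul_pow, hap, mul_one]⟩ : S)) s) := by
        rintro (x | x) (y | y) hxy
        · have h0 : x = y := congrArg (fun s : S => s.1 0) hxy
          exact congrArg Sum.inl h0
        · have hx0 : x = y := congrArg (fun s : S => s.1 0) hxy
          have hx1 : x = y * a := congrArg (fun s : S => s.1 1) hxy
          rw [hx0] at hx1
          exact absurd (mul_left_cancel (hx1.symm.trans (mul_one y).symm)) ha1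
        · have hx0 : x = y := congrArg (fun s : S => s.1 0) hxy
          have hx1 : x * a = y := congrArg (fun s : S => s.1 1) hxy
          rw [hx0] at hx1
          exact absurd (mul_left_cancel (hx1.trans (mul_one y).symm)) ha1
        · have h0 : x = y := congrArg (fun s : S => s.1 0) hxy
          exact congrArg Sum.inr h0
      have hle := Nat.card_le_card_of_injective _ φinj
      rw [Nat.card_sum, hc'] at hle
      have hApos : 0 < Nat.card A := Nat.card_pos
      omega
  -- module structure
  letI : Module (ZMod p) (Additive A) := AddCommGroup.zmodModule (n := p) (by
    intro x
    apply Additive.toMul.injective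
    rw [toMul_nsmul]
    exact hpow _)
  haveI hmod : Module (ZMod p) (Additive A) := inferInstance
  haveI : Module.Finite (ZMod p) (Additive A) := Module.Finite.of_finite
  set m := Module.finrank (ZMod p) (Additive A) with hm
  have φ := (Module.finBasis (ZMod p) (Additive A)).equivFun
  haveI : NeZero p := ⟨hp.ne_zero⟩
  refine Or.inr (Or.inr (Or.inr ⟨p, m, hp, ?_, ?_⟩))
  · have := Fintype.card_congr (Additive.ofMul.trans φ.toEquiv : A ≃ (Fin m → ZMod p))
    rw [Fintype.card_fun, ZMod.card, Fintype.card_fin] at this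
    exact this
  · refine ⟨Additive.ofMul.trans φ.toEquiv, fun x y => ?_⟩
    show φ (Additive.ofMul (mul x y)) = φ (Additive.ofMul x) + φ (Additive.ofMul y)
    have hxy : Additive.ofMul (mul x y) = Additive.ofMul x + Additive.ofMul y := rfl
    rw [hxy, map_add]
end

section
/- Every finite loop (quasigroup with identity element) with minimal spectrum is associative, hence a group. More precisely, in a loop of order n > 1, the number of associative triples (x,y,z) with (xy)z = x(yz) is at least 3n² − 3n + 1 > n², so the probability of associativity exceeds 1/n, forcing it to equal 1 under minimal spectrum. -/
section Aux

def leftT : MTerm grpdSig 3 := .app () ![.app () ![.var 0, .var 1], .var 2]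
def rightT : MTerm grpdSig 3 := .app () ![.var 0, .app () ![.var 1, .var 2]]

lemma eval_leftT {A : Type*} (mul : A → A → A) (x : Fin 3 → A) :
    (leftT.eval (grpdInterp mul) x) = mul (mul (x 0) (x 1)) (x 2) := by
  simp [leftT, MTerm.eval, grpdInterp]

lemma eval_rightT {A : Type*} (mul : A → A → A) (x : Fin 3 → A) :
    (rightT.eval (grpdInterp mul) x) = mul (x 0) (mul (x 1) (x 2)) := by
  simp [rightT, MTerm.eval, grpdInterp]

end Aux

theorem stmt17 {A : Type*} [Fintype A] (mul : A → A → A) (one : A)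
    (hlc : ∀ x y z : A, mul x y = mul x z → y = z)
    (hrc : ∀ x y z : A, mul y x = mul z x → y = z)
    (h1l : ∀ x, mul one x = x) (h1r : ∀ x, mul x one = x)
    (hmin : MinimalSpectrum A (grpdInterp mul)) :
    (∀ x y z : A, mul (mul x y) z = mul x (mul y z)) ∧
    (1 < Fintype.card A →
      3 * Fintype.card A ^ 2 - 3 * Fintype.card A + 1 ≤
        Nat.card {t : A × A × A //
          mul (mul t.1 t.2.1) t.2.2 = mul t.1 (mul t.2.1 t.2.2)}) := by
  classical
  have hassoc : ∀ x y z : A, mul (mul x y) z = mul x (mul y z) := by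
    by_cases hcard : Fintype.card A ≤ 1
    · have : Subsingleton A := Fintype.card_le_one_iff_subsingleton.mp hcard
      intro x y z
      exact Subsingleton.elim _ _
    · push_neg at hcard
      have hn0 : 0 < Fintype.card A := by omega
      obtain ⟨a, ha⟩ := Fintype.exists_ne_of_one_lt_card hcard one
      -- lower bound on the number of solutions
      have hinj : Function.Injective (fun s : (A × A) ⊕ Unit =>
          show {x : Fin 3 → A //
              mul (mul (x 0) (x 1)) (x 2) = mul (x 0) (mul (x 1) (x 2))} from
          match s with
          | .inl (y, z) => ⟨![one, y, z], by simp [h1l]⟩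
          | .inr _ => ⟨![a, one, one], by simp [h1l, h1r]⟩) := by
        rintro (⟨y, z⟩ | ⟨⟩) (⟨y', z'⟩ | ⟨⟩) h <;> simp only [Subtype.mk.injEq] at h
        · have h1 := congrFun h 1
          have h2 := congrFun h 2
          simp at h1 h2
          simp [h1, h2]
        · have h0 := congrFun h 0
          simp at h0
          exact absurd h0.symm ha
        · have h0 := congrFun h 0
          simp at h0
          exact absurd h0 ha
        · rfl
      have hlb : Fintype.card A ^ 2 + 1 ≤ Nat.card {x : Fin 3 → A //
          mul (mul (x 0) (x 1)) (x 2) = mul (x 0) (mul (x 1) (x 2))} := by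
        have := Nat.card_le_card_of_injective _ hinj
        simpa [Nat.card_eq_fintype_card, sq] using this
      -- all solutions
      have hcardfun : Nat.card {x : Fin 3 → A //
          mul (mul (x 0) (x 1)) (x 2) = mul (x 0) (mul (x 1) (x 2))}
          = Fintype.card A ^ 3 := by
        have hAq : (Nat.card A : ℚ) = (Fintype.card A : ℚ) := by
          rw [Nat.card_eq_fintype_card]
        have hne : ((Fintype.card A : ℚ)) ≠ 0 := by positivity
        rcases hmin 3 leftT rightT with h | h
        · rw [eqProb] at h
          simp only [eval_leftT, eval_rightT, hAq] at h
          rw [div_eq_iff (by positivity), one_mul] at h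
          exact_mod_cast h
        · exfalso
          rw [eqProb] at h
          simp only [eval_leftT, eval_rightT, hAq] at h
          rw [div_eq_iff (by positivity)] at h
          have h2 : (Nat.card {x : Fin 3 → A //
              mul (mul (x 0) (x 1)) (x 2) = mul (x 0) (mul (x 1) (x 2))} : ℚ)
              = (Fintype.card A : ℚ) ^ 2 := by
            rw [h]
            field_simp
          have h3 : Nat.card {x : Fin 3 → A //
              mul (mul (x 0) (x 1)) (x 2) = mul (x 0) (mul (x 1) (x 2))}
              = Fintype.card A ^ 2 := by exact_mod_cast h2
          rw [h3] at hlb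
          omega
      intro x y z
      by_contra hne
      have hx : ¬ (mul (mul (![x, y, z] 0) (![x, y, z] 1)) (![x, y, z] 2)
          = mul (![x, y, z] 0) (mul (![x, y, z] 1) (![x, y, z] 2))) := by
        simpa using hne
      have hlt := Fintype.card_subtype_lt (p := fun w : Fin 3 → A =>
        mul (mul (w 0) (w 1)) (w 2) = mul (w 0) (mul (w 1) (w 2))) hx
      rw [← Nat.card_eq_fintype_card, ← Nat.card_eq_fintype_card, hcardfun] at hlt
      simp [Nat.card_eq_fintype_card] at hlt
  refine ⟨hassoc, fun hcard => ?_⟩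
  have hall : Nat.card {t : A × A × A //
      mul (mul t.1 t.2.1) t.2.2 = mul t.1 (mul t.2.1 t.2.2)} = Fintype.card A ^ 3 := by
    rw [Nat.card_eq_fintype_card, Fintype.card_subtype]
    have ht : ∀ t : A × A × A, mul (mul t.1 t.2.1) t.2.2 = mul t.1 (mul t.2.1 t.2.2) :=
      fun t => hassoc _ _ _
    simp only [ht, Finset.filter_true]
    simp [Fintype.card_prod]
    ring
  rw [hall]
  have h : 3 * Fintype.card A ^ 2 + 1 ≤ Fintype.card A ^ 3 + 3 * Fintype.card A := by
    nlinarith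
  have h1 : Fintype.card A ≤ Fintype.card A ^ 2 := by nlinarith
  omega
end

section
/- Every finite alternative quasigroup with minimal spectrum is associative (hence a group): in a groupoid of order n > 1 satisfying both x(xy) = (xx)y and (yx)x = y(xx), the associative triples include all (x,x,z) and (x,y,y), giving at least 2n² − n > n² associative triples, so minimality forces full associativity. -/
def tAssocL : MTerm grpdSig 3 := .app () ![.app () ![.var 0, .var 1], .var 2]
def tAssocR : MTerm grpdSig 3 := .app () ![.var 0, .app () ![.var 1, .var 2]]

lemma evalL {A : Type*} (mul : A → A → A) (x : Fin 3 → A) :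
    tAssocL.eval (grpdInterp mul) x = mul (mul (x 0) (x 1)) (x 2) := rfl

lemma evalR {A : Type*} (mul : A → A → A) (x : Fin 3 → A) :
    tAssocR.eval (grpdInterp mul) x = mul (x 0) (mul (x 1) (x 2)) := rfl

def e3 {A : Type*} : (Fin 3 → A) ≃ A × A × A where
  toFun := fun x => (x 0, x 1, x 2)
  invFun := fun t => ![t.1, t.2.1, t.2.2]
  left_inv := by intro x; funext i; fin_cases i <;> rfl
  right_inv := fun t => rfl

lemma card_or_eq {A : Type*} [Fintype A] [DecidableEq A] :
    Fintype.card {t : A × A × A // t.1 = t.2.1 ∨ t.2.1 = t.2.2} + Fintype.card A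
      = 2 * Fintype.card A ^ 2 := by
  classical
  have h1 : Fintype.card {t : A × A × A // t.1 = t.2.1} = Fintype.card A ^ 2 := by
    have e : {t : A × A × A // t.1 = t.2.1} ≃ A × A :=
      { toFun := fun t => (t.1.1, t.1.2.2)
        invFun := fun p => ⟨(p.1, p.1, p.2), rfl⟩
        left_inv := fun ⟨⟨a, b, c⟩, h⟩ => by cases h; rfl
        right_inv := fun p => rfl }
    rw [Fintype.card_congr e, Fintype.card_prod, sq]
  have h2 : Fintype.card {t : A × A × A // t.2.1 = t.2.2} = Fintype.card A ^ 2 := by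
    have e : {t : A × A × A // t.2.1 = t.2.2} ≃ A × A :=
      { toFun := fun t => (t.1.1, t.1.2.1)
        invFun := fun p => ⟨(p.1, p.2, p.2), rfl⟩
        left_inv := fun ⟨⟨a, b, c⟩, h⟩ => by cases h; rfl
        right_inv := fun p => rfl }
    rw [Fintype.card_congr e, Fintype.card_prod, sq]
  have h3 : Fintype.card {t : A × A × A // t.1 = t.2.1 ∧ t.2.1 = t.2.2} = Fintype.card A := by
    have e : {t : A × A × A // t.1 = t.2.1 ∧ t.2.1 = t.2.2} ≃ A :=
      { toFun := fun t => t.1.1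
        invFun := fun a => ⟨(a, a, a), rfl, rfl⟩
        left_inv := fun ⟨⟨a, b, c⟩, h, h'⟩ => by cases h; cases h'; rfl
        right_inv := fun a => rfl }
    rw [Fintype.card_congr e]
  have key := Finset.card_union_add_card_inter
    (Finset.univ.filter fun t : A × A × A => t.1 = t.2.1)
    (Finset.univ.filter fun t : A × A × A => t.2.1 = t.2.2)
  rw [← Finset.filter_or, ← Finset.filter_and] at key
  rw [Fintype.card_subtype] at h1 h2 h3 ⊢
  linarith

theorem stmt18 {A : Type*} [Fintype A] (mul : A → A → A)
    (hlc : ∀ x y z : A, mul x y = mul x z → y = z)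
    (hrc : ∀ x y z : A, mul y x = mul z x → y = z)
    (hla : ∀ x y : A, mul x (mul x y) = mul (mul x x) y)
    (hra : ∀ y x : A, mul (mul y x) x = mul y (mul x x))
    (hmin : MinimalSpectrum A (grpdInterp mul)) :
    (∀ x y z : A, mul (mul x y) z = mul x (mul y z)) ∧
    (1 < Fintype.card A →
      2 * Fintype.card A ^ 2 - Fintype.card A ≤
        Nat.card {t : A × A × A //
          mul (mul t.1 t.2.1) t.2.2 = mul t.1 (mul t.2.1 t.2.2)}) := by
  classical
  have hn1 : Nat.card A = Fintype.card A := Nat.card_eq_fintype_card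
  have hcardS : Nat.card {x : Fin 3 → A //
        tAssocL.eval (grpdInterp mul) x = tAssocR.eval (grpdInterp mul) x}
      = Fintype.card {t : A × A × A //
        mul (mul t.1 t.2.1) t.2.2 = mul t.1 (mul t.2.1 t.2.2)} := by
    rw [Nat.card_eq_fintype_card]
    refine Fintype.card_congr ((e3 (A := A)).subtypeEquiv ?_)
    intro x
    rw [evalL, evalR]
    exact Iff.rfl
  have hOrLe : Fintype.card {t : A × A × A // t.1 = t.2.1 ∨ t.2.1 = t.2.2}
      ≤ Fintype.card {t : A × A × A //
        mul (mul t.1 t.2.1) t.2.2 = mul t.1 (mul t.2.1 t.2.2)} := by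
    apply Fintype.card_subtype_mono
    rintro ⟨a, b, c⟩ (h | h)
    · cases h; exact (hla a c).symm
    · cases h; exact hra a b
  have hkey := card_or_eq (A := A)
  have hassoc : ∀ x y z : A, mul (mul x y) z = mul x (mul y z) := by
    rcases le_or_gt (Fintype.card A) 1 with h1 | h1
    · have : Subsingleton A := Fintype.card_le_one_iff_subsingleton.mp h1
      intro x y z
      exact Subsingleton.elim _ _
    · by_contra hne
      push_neg at hne
      obtain ⟨x, y, z, hxyz⟩ := hne
      have hlt : Fintype.card {t : A × A × A //
            mul (mul t.1 t.2.1) t.2.2 = mul t.1 (mul t.2.1 t.2.2)}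
          < Fintype.card (A × A × A) :=
        Fintype.card_subtype_lt (x := (x, y, z)) hxyz
      have hprod : Fintype.card (A × A × A) = Fintype.card A ^ 3 := by
        simp [Fintype.card_prod]; ring
      have hnpos : 0 < Fintype.card A := by omega
      have hnQ : (0 : ℚ) < (Fintype.card A : ℚ) := by exact_mod_cast hnpos
      rcases hmin 3 tAssocL tAssocR with h | h <;>
        unfold eqProb at h <;> rw [hcardS, hn1] at h
      · have hc : (Fintype.card {t : A × A × A //
              mul (mul t.1 t.2.1) t.2.2 = mul t.1 (mul t.2.1 t.2.2)} : ℚ)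
            = (Fintype.card A : ℚ) ^ 3 := by
          rwa [div_eq_one_iff_eq (by positivity)] at h
        have hcN : Fintype.card {t : A × A × A //
              mul (mul t.1 t.2.1) t.2.2 = mul t.1 (mul t.2.1 t.2.2)}
            = Fintype.card A ^ 3 := by exact_mod_cast hc
        omega
      · rw [div_eq_div_iff (by positivity) (by positivity)] at h
        have hc : (Fintype.card {t : A × A × A //
              mul (mul t.1 t.2.1) t.2.2 = mul t.1 (mul t.2.1 t.2.2)} : ℚ)
            = (Fintype.card A : ℚ) ^ 2 := by
          have := h
          field_simp at this ⊢
          nlinarith [this, hnQ]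
        have hcN : Fintype.card {t : A × A × A //
              mul (mul t.1 t.2.1) t.2.2 = mul t.1 (mul t.2.1 t.2.2)}
            = Fintype.card A ^ 2 := by exact_mod_cast hc
        nlinarith [hkey, hOrLe, hcN, h1]
  refine ⟨hassoc, fun _ => ?_⟩
  rw [Nat.card_eq_fintype_card]
  exact Nat.sub_le_iff_le_add.mpr (by linarith)
end

section
/- Let A be a finite algebra of order n > 1 with minimal spectrum, and let t ≈ t' be an equation in k variables. If A universally satisfies two specializations t ≈ t'/(x ≈ y) and t ≈ t'/(x' ≈ y') where {x,y} ≠ {x',y'} are two distinct pairs of variables of t ≈ t', then A universally satisfies t ≈ t'. (The solution sets Γ1 = {tuples with x = y} and Γ2 = {tuples with x' = y'} satisfy |Γ1 ∪ Γ2| = 2n^{k−1} − n^{k−2} > n^{k−1}.) -/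
/-- Card of `{x : Fin k → A // x i = x j}` is `|A|^(k-1)` for `i ≠ j`. -/
lemma card_diag {A : Type*} [Fintype A] [DecidableEq A] {k : ℕ} (i j : Fin k) (hij : i ≠ j) :
    Fintype.card {x : Fin k → A // x i = x j} = Fintype.card A ^ (k - 1) := by
  have e : {x : Fin k → A // x i = x j} ≃ ({m : Fin k // m ≠ j} → A) :=
    { toFun := fun x m => x.1 m.1
      invFun := fun y => ⟨fun m => if h : m = j then y ⟨i, hij⟩ else y ⟨m, h⟩, by
        simp [hij]⟩
      left_inv := fun x => Subtype.ext (funext fun m => by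
        by_cases h : m = j
        · subst h; simpa using x.2
        · simp [h])
      right_inv := fun y => funext fun m => by simp [m.2] }
  rw [Fintype.card_congr e, Fintype.card_fun]
  congr 1
  simp [Fintype.card_subtype_compl]

lemma exists_ne_sat {A : Type*} [Fintype A] [DecidableEq A] (hA : 1 < Fintype.card A) {k : ℕ}
    (i j i' j' : Fin k) (hij : i ≠ j)
    (hm : i ∉ ({i', j'} : Set (Fin k)) ∨ j ∉ ({i', j'} : Set (Fin k))) :
    ∃ x : Fin k → A, x i' = x j' ∧ x i ≠ x j := by
  obtain ⟨a, b, hab⟩ := Fintype.exists_pair_of_one_lt_card hA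
  rcases hm with hm | hm
  · simp only [Set.mem_insert_iff, Set.mem_singleton_iff, not_or] at hm
    have e1 : i' ≠ i := fun h => hm.1 h.symm
    have e2 : j' ≠ i := fun h => hm.2 h.symm
    refine ⟨fun m => if m = i then a else b, ?_, ?_⟩
    · simp [e1, e2]
    · simpa [Ne.symm hij] using hab
  · simp only [Set.mem_insert_iff, Set.mem_singleton_iff, not_or] at hm
    have e1 : i' ≠ j := fun h => hm.1 h.symm
    have e2 : j' ≠ j := fun h => hm.2 h.symm
    refine ⟨fun m => if m = j then a else b, ?_, ?_⟩
    · simp [e1, e2]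
    · simpa [hij] using hab.symm

lemma lower_bound {A : Type*} [Fintype A] [DecidableEq A] {k : ℕ}
    (p : (Fin k → A) → Prop) [DecidablePred p]
    (i j : Fin k) (hij : i ≠ j) (hΓ : ∀ x, x i = x j → p x)
    (x0 : Fin k → A) (hx0 : p x0) (hx0' : x0 i ≠ x0 j) :
    Fintype.card A ^ (k - 1) < Fintype.card {x // p x} := by
  have hS : Fintype.card {x // p x} = (Finset.univ.filter p).card :=
    Fintype.card_subtype p
  have hΓc : (Finset.univ.filter (fun x : Fin k → A => x i = x j)).card
      = Fintype.card A ^ (k - 1) := by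
    rw [← Fintype.card_subtype, card_diag i j hij]
  have hsub : insert x0 (Finset.univ.filter (fun x : Fin k → A => x i = x j))
      ⊆ Finset.univ.filter p := by
    intro y hy
    simp only [Finset.mem_insert, Finset.mem_filter, Finset.mem_univ, true_and] at hy ⊢
    rcases hy with rfl | hy
    · exact hx0
    · exact hΓ y hy
  have hnot : x0 ∉ Finset.univ.filter (fun x : Fin k → A => x i = x j) := by
    simp [hx0']
  have h1 : Fintype.card A ^ (k - 1)
      < (insert x0 (Finset.univ.filter (fun x : Fin k → A => x i = x j))).card := by
    rw [Finset.card_insert_of_notMem hnot, hΓc]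
    exact Nat.lt_succ_self _
  have h2 := Finset.card_le_card hsub
  rw [hS]
  exact lt_of_lt_of_le h1 h2

theorem stmt19 {σ : MSignature} {A : Type*} [Fintype A]
    (hA : 1 < Fintype.card A)
    (interp : (f : σ.ops) → (Fin (σ.arity f) → A) → A)
    (hmin : MinimalSpectrum A interp)
    {k : ℕ} (t t' : MTerm σ k)
    (i j i' j' : Fin k) (hij : i ≠ j) (hij' : i' ≠ j')
    (hne : ({i, j} : Set (Fin k)) ≠ {i', j'})
    (h1 : ∀ x : Fin k → A, x i = x j → t.eval interp x = t'.eval interp x)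
    (h2 : ∀ x : Fin k → A, x i' = x j' → t.eval interp x = t'.eval interp x) :
    ∀ x : Fin k → A, t.eval interp x = t'.eval interp x := by
  classical
  have hk : 0 < k := i.pos
  have hn0 : ((Fintype.card A : ℚ)) ≠ 0 := by positivity
  have hcase : (i ∉ ({i', j'} : Set (Fin k)) ∨ j ∉ ({i', j'} : Set (Fin k))) ∨
      (i' ∉ ({i, j} : Set (Fin k)) ∨ j' ∉ ({i, j} : Set (Fin k))) := by
    by_contra h
    push_neg at h
    obtain ⟨⟨hi, hj⟩, hi', hj'⟩ := h
    apply hne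
    ext m
    simp only [Set.mem_insert_iff, Set.mem_singleton_iff] at *
    constructor <;> rintro (rfl | rfl) <;> tauto
  have hbig : Fintype.card A ^ (k - 1)
      < Fintype.card {x : Fin k → A // t.eval interp x = t'.eval interp x} := by
    rcases hcase with hm | hm
    · obtain ⟨x0, hx1, hx2⟩ := exists_ne_sat hA i j i' j' hij hm
      exact lower_bound _ i j hij h1 x0 (h2 x0 hx1) hx2
    · obtain ⟨x0, hx1, hx2⟩ := exists_ne_sat hA i' j' i j hij' hm
      exact lower_bound _ i' j' hij' h2 x0 (h1 x0 hx1) hx2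
  have hcard : Nat.card {x : Fin k → A // t.eval interp x = t'.eval interp x}
      = Fintype.card {x : Fin k → A // t.eval interp x = t'.eval interp x} :=
    Nat.card_eq_fintype_card
  have hnA : Nat.card A = Fintype.card A := Nat.card_eq_fintype_card
  rcases hmin k t t' with h | h
  · -- probability 1: all tuples are solutions
    unfold eqProb at h
    rw [hnA, div_eq_one_iff_eq (by positivity)] at h
    have hfull : Nat.card {x : Fin k → A // t.eval interp x = t'.eval interp x}
        = Fintype.card A ^ k := by exact_mod_cast h
    intro x
    by_contra hx
    have hlt : Fintype.card {x : Fin k → A // t.eval interp x = t'.eval interp x}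
        < Fintype.card (Fin k → A) := Fintype.card_subtype_lt (x := x) hx
    rw [Fintype.card_fun, Fintype.card_fin] at hlt
    omega
  · -- probability 1/n: contradiction with hbig
    exfalso
    unfold eqProb at h
    rw [hnA, div_eq_div_iff (by positivity) hn0] at h
    have hpow : ((Fintype.card A : ℚ)) ^ k
        = (Fintype.card A : ℚ) ^ (k - 1) * Fintype.card A := by
      conv_lhs => rw [show k = (k - 1) + 1 from (Nat.succ_pred_eq_of_pos hk).symm]
      rw [pow_succ]
    have heq : (Nat.card {x : Fin k → A // t.eval interp x = t'.eval interp x} : ℚ)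
        = (Fintype.card A : ℚ) ^ (k - 1) :=
      mul_right_cancel₀ hn0 (by rw [h, one_mul, hpow])
    have : Nat.card {x : Fin k → A // t.eval interp x = t'.eval interp x}
        = Fintype.card A ^ (k - 1) := by exact_mod_cast heq
    omega
end
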